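/- arXiv:2406.04414 — 4 statements merged into one kernel-verified Lean document; each statement's English description precedes it below -/
import Mathlib

section
/- Let ψ ∈ C²_c(ℝ²) solve Δψ + f(|x|, ψ) = 0 where f(r,t) = χ(r−a) f₋(t) + (1−χ(r−a)) f₊(t) for continuous f₋, f₊ and a smooth cutoff χ. Then the velocity field v := ∇⊥ψ = (∂₂ψ, −∂₁ψ) solves the stationary incompressible Euler equations v·∇v + ∇p = 0, div v = 0 on ℝ² (for some pressure p) if and only if χ'(|x|−a)[f₋(ψ(x)) − f₊(ψ(x))] (∇⊥ψ(x) · e_r(x)) = 0 for all x ∈ ℝ², where e_r is the unit radial vector. -/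
open Real MeasureTheory

/-- Partial derivative in the first variable. -/
noncomputable def pd1 (ψ : ℝ × ℝ → ℝ) : ℝ × ℝ → ℝ := fun x => deriv (fun s => ψ (s, x.2)) x.1

/-- Partial derivative in the second variable. -/
noncomputable def pd2 (ψ : ℝ × ℝ → ℝ) : ℝ × ℝ → ℝ := fun x => deriv (fun s => ψ (x.1, s)) x.2



/-- helper linear map -/

noncomputable def lm (c d : ℝ) : ℝ × ℝ →L[ℝ] ℝ :=
  c • (ContinuousLinearMap.fst ℝ ℝ ℝ) + d • (ContinuousLinearMap.snd ℝ ℝ ℝ)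

@[simp] lemma lm_apply (c d : ℝ) (y : ℝ × ℝ) : lm c d y = c * y.1 + d * y.2 := by
  simp [lm]

lemma hasDerivAt_slice1 {u : ℝ × ℝ → ℝ} {L : ℝ × ℝ →L[ℝ] ℝ} {x : ℝ × ℝ}
    (h : HasFDerivAt u L x) : HasDerivAt (fun s => u (s, x.2)) (L (1, 0)) x.1 := by
  have hγ : HasDerivAt (fun s : ℝ => (s, x.2)) ((1 : ℝ), (0 : ℝ)) x.1 :=
    (hasDerivAt_id x.1).prodMk (hasDerivAt_const _ _)
  exact h.comp_hasDerivAt x.1 hγ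

lemma hasDerivAt_slice2 {u : ℝ × ℝ → ℝ} {L : ℝ × ℝ →L[ℝ] ℝ} {x : ℝ × ℝ}
    (h : HasFDerivAt u L x) : HasDerivAt (fun s => u (x.1, s)) (L (0, 1)) x.2 := by
  have hγ : HasDerivAt (fun s : ℝ => (x.1, s)) ((0 : ℝ), (1 : ℝ)) x.2 :=
    (hasDerivAt_const _ _).prodMk (hasDerivAt_id x.2)
  exact h.comp_hasDerivAt x.2 hγ

lemma pd1_eq {u : ℝ × ℝ → ℝ} {L : ℝ × ℝ →L[ℝ] ℝ} {x : ℝ × ℝ}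
    (h : HasFDerivAt u L x) : pd1 u x = L (1, 0) := (hasDerivAt_slice1 h).deriv

lemma pd2_eq {u : ℝ × ℝ → ℝ} {L : ℝ × ℝ →L[ℝ] ℝ} {x : ℝ × ℝ}
    (h : HasFDerivAt u L x) : pd2 u x = L (0, 1) := (hasDerivAt_slice2 h).deriv

lemma lm_eta (L : ℝ × ℝ →L[ℝ] ℝ) : L = lm (L (1, 0)) (L (0, 1)) := by
  apply ContinuousLinearMap.ext
  rintro ⟨y1, y2⟩
  have : (y1, y2) = y1 • ((1 : ℝ), (0 : ℝ)) + y2 • ((0 : ℝ), (1 : ℝ)) := by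
    simp [Prod.ext_iff]
  simp only [lm_apply]
  conv_lhs => rw [this]
  rw [map_add, _root_.map_smul, _root_.map_smul]
  simp only [smul_eq_mul]
  ring

lemma hasFDerivAt_pd {u : ℝ × ℝ → ℝ} {x : ℝ × ℝ} (h : DifferentiableAt ℝ u x) :
    HasFDerivAt u (lm (pd1 u x) (pd2 u x)) x := by
  have h' := h.hasFDerivAt
  rwa [pd1_eq h', pd2_eq h', ← lm_eta]

lemma hasDerivAt_pd1 {u : ℝ × ℝ → ℝ} {x : ℝ × ℝ} (h : DifferentiableAt ℝ u x) :
    HasDerivAt (fun s => u (s, x.2)) (pd1 u x) x.1 := by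
  simpa using hasDerivAt_slice1 (hasFDerivAt_pd h)

lemma hasDerivAt_pd2 {u : ℝ × ℝ → ℝ} {x : ℝ × ℝ} (h : DifferentiableAt ℝ u x) :
    HasDerivAt (fun s => u (x.1, s)) (pd2 u x) x.2 := by
  simpa using hasDerivAt_slice2 (hasFDerivAt_pd h)

noncomputable def rr (x : ℝ × ℝ) : ℝ := Real.sqrt (x.1 ^ 2 + x.2 ^ 2)

lemma rr_nonneg (x : ℝ × ℝ) : 0 ≤ rr x := Real.sqrt_nonneg _

lemma rr_pos {x : ℝ × ℝ} (hx : x ≠ 0) : 0 < rr x := by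
  apply Real.sqrt_pos.2
  have : x.1 ≠ 0 ∨ x.2 ≠ 0 := by
    by_contra h
    push_neg at h
    exact hx (Prod.ext h.1 h.2)
  rcases this with h | h
  · nlinarith [sq_nonneg x.1, sq_nonneg x.2, sq_pos_of_ne_zero h]
  · nlinarith [sq_nonneg x.1, sq_pos_of_ne_zero h]

lemma rr_circle (r θ : ℝ) (hr : 0 ≤ r) : rr (r * Real.cos θ, r * Real.sin θ) = r := by
  have : (r * Real.cos θ) ^ 2 + (r * Real.sin θ) ^ 2 = r ^ 2 := by
    have := Real.sin_sq_add_cos_sq θ; nlinarith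
  rw [rr, this, Real.sqrt_sq hr]

lemma rr_axis (s : ℝ) (hs : 0 ≤ s) : rr (s, 0) = s := by
  have : rr (s, 0) = Real.sqrt (s ^ 2) := by norm_num [rr]
  rw [this, Real.sqrt_sq hs]

lemma continuous_rr : Continuous rr :=
  Real.continuous_sqrt.comp (by fun_prop)

/-- polar representation -/
lemma polar_rep {x : ℝ × ℝ} (hx : x ≠ 0) :
    ∃ θ : ℝ, x.1 = rr x * Real.cos θ ∧ x.2 = rr x * Real.sin θ := by
  set z : ℂ := ⟨x.1, x.2⟩ with hz
  have hz0 : z ≠ 0 := by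
    intro h
    apply hx
    have h1 : z.re = 0 := by rw [h]; simp
    have h2 : z.im = 0 := by rw [h]; simp
    exact Prod.ext h1 h2
  have habs : ‖z‖ = rr x := by
    rw [Complex.norm_def, Complex.normSq_apply, rr]
    norm_num [hz]
    ring_nf
  refine ⟨Complex.arg z, ?_, ?_⟩
  · rw [Complex.cos_arg hz0, habs]
    field_simp [(rr_pos hx).ne']
    rfl
  · rw [Complex.sin_arg, habs]
    field_simp [(rr_pos hx).ne']
    rfl

lemma ftc {f : ℝ → ℝ} (hf : Continuous f) (t : ℝ) :
    HasDerivAt (fun u => ∫ s in (0:ℝ)..u, f s) (f t) t :=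
  intervalIntegral.integral_hasDerivAt_right (hf.intervalIntegrable _ _)
    (hf.stronglyMeasurableAtFilter _ _) hf.continuousAt

lemma hasFDerivAt_rr {x : ℝ × ℝ} (hx : x ≠ 0) :
    HasFDerivAt rr (lm (x.1 / rr x) (x.2 / rr x)) x := by
  have h1 : HasFDerivAt (fun y : ℝ × ℝ => y.1) (ContinuousLinearMap.fst ℝ ℝ ℝ) x :=
    hasFDerivAt_fst
  have h2 : HasFDerivAt (fun y : ℝ × ℝ => y.2) (ContinuousLinearMap.snd ℝ ℝ ℝ) x :=
    hasFDerivAt_snd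
  have hfe : (fun y : ℝ × ℝ => y.1 ^ 2 + y.2 ^ 2) = fun y : ℝ × ℝ => y.1 * y.1 + y.2 * y.2 := by
    funext y; ring
  have hn : HasFDerivAt (fun y : ℝ × ℝ => y.1 ^ 2 + y.2 ^ 2)
      ((x.1 • ContinuousLinearMap.fst ℝ ℝ ℝ + x.1 • ContinuousLinearMap.fst ℝ ℝ ℝ)
        + (x.2 • ContinuousLinearMap.snd ℝ ℝ ℝ + x.2 • ContinuousLinearMap.snd ℝ ℝ ℝ)) x := by
    rw [hfe]
    exact (h1.mul h1).add (h2.mul h2)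
  have hr0 : 0 < rr x := rr_pos hx
  have hn0 : x.1 ^ 2 + x.2 ^ 2 ≠ 0 := by
    have : 0 < x.1 ^ 2 + x.2 ^ 2 := by
      have := hr0; rw [rr] at this
      nlinarith [Real.sq_sqrt (by positivity : (0:ℝ) ≤ x.1 ^ 2 + x.2 ^ 2)]
    linarith
  have hs := (Real.hasDerivAt_sqrt hn0).comp_hasFDerivAt x hn
  have heq : (1 / (2 * Real.sqrt (x.1 ^ 2 + x.2 ^ 2))) •
      ((x.1 • ContinuousLinearMap.fst ℝ ℝ ℝ + x.1 • ContinuousLinearMap.fst ℝ ℝ ℝ)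
        + (x.2 • ContinuousLinearMap.snd ℝ ℝ ℝ + x.2 • ContinuousLinearMap.snd ℝ ℝ ℝ))
      = lm (x.1 / rr x) (x.2 / rr x) := by
    apply ContinuousLinearMap.ext
    intro y
    have : Real.sqrt (x.1 ^ 2 + x.2 ^ 2) = rr x := rfl
    simp [this]
    field_simp
    ring
  rw [heq] at hs
  exact hs

lemma hasDerivAt_circle_comp {u : ℝ × ℝ → ℝ} {L : ℝ × ℝ →L[ℝ] ℝ} {r θ : ℝ}
    (h : HasFDerivAt u L (r * Real.cos θ, r * Real.sin θ)) :
    HasDerivAt (fun t => u (r * Real.cos t, r * Real.sin t))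
      (L (-(r * Real.sin θ), r * Real.cos θ)) θ := by
  have hγ : HasDerivAt (fun t : ℝ => (r * Real.cos t, r * Real.sin t))
      ((r * -Real.sin θ, r * Real.cos θ)) θ :=
    ((Real.hasDerivAt_cos θ).const_mul r).prodMk ((Real.hasDerivAt_sin θ).const_mul r)
  have := h.comp_hasDerivAt θ hγ
  simp only [mul_neg] at this
  exact this

lemma hasDerivAt_ray_comp {u : ℝ × ℝ → ℝ} {L : ℝ × ℝ →L[ℝ] ℝ} {c s t : ℝ}
    (h : HasFDerivAt u L (t * c, t * s)) :
    HasDerivAt (fun t' => u (t' * c, t' * s)) (L (c, s)) t := by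
  have hγ : HasDerivAt (fun t' : ℝ => (t' * c, t' * s)) ((c, s)) t := by
    simpa using ((hasDerivAt_id t).mul_const c).prodMk ((hasDerivAt_id t).mul_const s)
  exact h.comp_hasDerivAt t hγ

/-- If `u` is continuous at `0`, differentiable away from `0` with derivative `L x`,
and `L` is continuous at `0`, then `u` is differentiable at `0` with derivative `L 0`. -/
lemma hasFDerivAt_zero_of_continuousAt {u : ℝ × ℝ → ℝ} {L : ℝ × ℝ → (ℝ × ℝ →L[ℝ] ℝ)}
    (hu : ContinuousAt u 0) (hL : ContinuousAt L 0)
    (hd : ∀ x : ℝ × ℝ, x ≠ 0 → HasFDerivAt u (L x) x) : HasFDerivAt u (L 0) 0 := by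
  rw [hasFDerivAt_iff_isLittleO_nhds_zero]
  rw [Asymptotics.isLittleO_iff]
  intro c hc
  have hL' : ∀ᶠ y : ℝ × ℝ in nhds 0, ‖L y - L 0‖ ≤ c := by
    have := hL.tendsto
    have h2 : ∀ᶠ M : ℝ × ℝ →L[ℝ] ℝ in nhds (L 0), ‖M - L 0‖ ≤ c := by
      have : Metric.closedBall (L 0) c ∈ nhds (L 0) := Metric.closedBall_mem_nhds _ hc
      filter_upwards [this] with M hM
      simpa [dist_eq_norm] using hM
    exact this.eventually h2
  rw [Metric.eventually_nhds_iff] at hL'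
  obtain ⟨δ, hδ, hball⟩ := hL'
  rw [Metric.eventually_nhds_iff]
  refine ⟨δ, hδ, ?_⟩
  intro x hxδ
  simp only [add_zero, zero_add] at *
  by_cases hx : x = 0
  · simp [hx]
  -- the function h y = u y - L 0 y
  set h : ℝ × ℝ → ℝ := fun y => u y - L 0 y with hh
  have key : ∀ ε : ℝ, ε ∈ Set.Ioo (0:ℝ) 1 → ‖h x - h (ε • x)‖ ≤ c * ‖x - ε • x‖ := by
    intro ε hε
    set s : Set (ℝ × ℝ) := segment ℝ (ε • x) x with hs
    have hder : ∀ y ∈ s, HasFDerivWithinAt h (L y - L 0) s y := by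
      intro y hy
      obtain ⟨t1, t2, ht1, ht2, hsum, hyy⟩ := hy
      have hy0 : y ≠ 0 := by
        intro h0
        apply hx
        have : (t1 * ε + t2) • x = 0 := by
          rw [← hyy] at h0; rw [← h0, smul_smul] at *; module
        have hcoef : t1 * ε + t2 ≠ 0 := by
          intro h'
          have h2 : t2 = 0 := by nlinarith [mul_nonneg ht1 hε.1.le]
          have h1 : t1 = 1 := by linarith
          rw [h1, h2] at h'
          simp at h'
          linarith [hε.1]
        exact (smul_eq_zero.1 this).resolve_left hcoef
      exact (((hd y hy0).sub ((L 0).hasFDerivAt))).hasFDerivWithinAt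
    have hbound : ∀ y ∈ s, ‖L y - L 0‖ ≤ c := by
      intro y hy
      obtain ⟨t1, t2, ht1, ht2, hsum, hyy⟩ := hy
      apply hball
      have : ‖y‖ ≤ ‖x‖ := by
        calc ‖y‖ = ‖(t1 * ε + t2) • x‖ := by rw [← hyy, smul_smul] at *; congr 1; module
        _ = |t1 * ε + t2| * ‖x‖ := by rw [norm_smul, Real.norm_eq_abs]
        _ ≤ 1 * ‖x‖ := by
            apply mul_le_mul_of_nonneg_right _ (norm_nonneg x)
            rw [abs_le]
            constructor <;> nlinarith [hε.1, hε.2]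
        _ = ‖x‖ := one_mul _
      calc dist y 0 = ‖y‖ := by simp
      _ ≤ ‖x‖ := this
      _ = dist x 0 := by simp
      _ < δ := hxδ
    have := (convex_segment _ _).norm_image_sub_le_of_norm_hasFDerivWithin_le
      hder hbound (left_mem_segment ℝ _ _) (right_mem_segment ℝ _ _)
    simpa using this
  -- take the limit ε → 0⁺
  have hlim : Filter.Tendsto (fun ε : ℝ => ‖h x - h (ε • x)‖) (nhdsWithin 0 (Set.Ioi 0))
      (nhds ‖h x - h 0‖) := by
    apply Filter.Tendsto.norm
    apply Filter.Tendsto.const_sub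
    have hcont : ContinuousAt h 0 := by
      apply ContinuousAt.sub hu ((L 0).continuous.continuousAt)
    have hsm : Filter.Tendsto (fun ε : ℝ => ε • x) (nhdsWithin 0 (Set.Ioi 0)) (nhds 0) := by
      have : Filter.Tendsto (fun ε : ℝ => ε • x) (nhds 0) (nhds ((0:ℝ) • x)) := by
        exact (continuous_id.smul continuous_const).tendsto 0
      simpa using this.mono_left nhdsWithin_le_nhds
    exact (hcont.tendsto).comp hsm
  have hev : ∀ᶠ ε : ℝ in nhdsWithin 0 (Set.Ioi 0), ‖h x - h (ε • x)‖ ≤ c * ‖x‖ := by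
    filter_upwards [Ioo_mem_nhdsGT_of_mem (by constructor <;> norm_num : (0:ℝ) ∈ Set.Ico 0 1)]
      with ε hε
    calc ‖h x - h (ε • x)‖ ≤ c * ‖x - ε • x‖ := key ε hε
    _ = c * ‖(1 - ε) • x‖ := by congr 1; rw [sub_smul, one_smul]
    _ = c * (|1 - ε| * ‖x‖) := by rw [norm_smul, Real.norm_eq_abs]
    _ ≤ c * (1 * ‖x‖) := by
        apply mul_le_mul_of_nonneg_left _ (le_of_lt hc)
        apply mul_le_mul_of_nonneg_right _ (norm_nonneg x)
        rw [abs_le]; constructor <;> [linarith [hε.2]; linarith [hε.1]]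
    _ = c * ‖x‖ := by rw [one_mul]
  have hfinal : ‖h x - h 0‖ ≤ c * ‖x‖ :=
    le_of_tendsto hlim hev
  have h0 : h 0 = u 0 := by simp [hh]
  rw [h0] at hfinal
  calc ‖u x - u 0 - L 0 x‖ = ‖h x - u 0‖ := by rw [hh]; congr 1; ring
  _ ≤ c * ‖x‖ := hfinal

lemma pd1_fderiv {ψ : ℝ × ℝ → ℝ} (hψ : Differentiable ℝ ψ) :
    pd1 ψ = fun x => fderiv ℝ ψ x (1, 0) := by
  funext x; exact pd1_eq (hψ x).hasFDerivAt

lemma pd2_fderiv {ψ : ℝ × ℝ → ℝ} (hψ : Differentiable ℝ ψ) :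
    pd2 ψ = fun x => fderiv ℝ ψ x (0, 1) := by
  funext x; exact pd2_eq (hψ x).hasFDerivAt

lemma contDiff_pd1 {ψ : ℝ × ℝ → ℝ} (hψ : ContDiff ℝ 2 ψ) : ContDiff ℝ 1 (pd1 ψ) := by
  rw [pd1_fderiv (hψ.differentiable (by norm_num))]
  exact (hψ.fderiv_right (by norm_num)).clm_apply contDiff_const

lemma contDiff_pd2 {ψ : ℝ × ℝ → ℝ} (hψ : ContDiff ℝ 2 ψ) : ContDiff ℝ 1 (pd2 ψ) := by
  rw [pd2_fderiv (hψ.differentiable (by norm_num))]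
  exact (hψ.fderiv_right (by norm_num)).clm_apply contDiff_const

lemma clairaut {ψ : ℝ × ℝ → ℝ} (hψ : ContDiff ℝ 2 ψ) (x : ℝ × ℝ) :
    pd1 (pd2 ψ) x = pd2 (pd1 ψ) x := by
  have hdiff : Differentiable ℝ ψ := hψ.differentiable (by norm_num)
  set f' : ℝ × ℝ → (ℝ × ℝ →L[ℝ] ℝ) := fderiv ℝ ψ with hf'def
  have hf : ∀ y, HasFDerivAt ψ (f' y) y := fun y => (hdiff y).hasFDerivAt
  have hf'cd : ContDiff ℝ 1 f' := hψ.fderiv_right (by norm_num)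
  have hf'd : HasFDerivAt f' (fderiv ℝ f' x) x :=
    ((hf'cd.differentiable (by norm_num)) x).hasFDerivAt
  set B := fderiv ℝ f' x with hB
  have hsym := second_derivative_symmetric hf hf'd ((1:ℝ), (0:ℝ)) ((0:ℝ), (1:ℝ))
  have e2 : pd2 ψ = fun y => f' y ((0:ℝ), (1:ℝ)) := pd2_fderiv hdiff
  have e1 : pd1 ψ = fun y => f' y ((1:ℝ), (0:ℝ)) := pd1_fderiv hdiff
  have hc2 : HasFDerivAt (fun y => f' y ((0:ℝ), (1:ℝ)))
      ((ContinuousLinearMap.apply ℝ ℝ ((0:ℝ), (1:ℝ))).comp B) x :=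
    (ContinuousLinearMap.apply ℝ ℝ ((0:ℝ), (1:ℝ))).hasFDerivAt.comp x hf'd
  have hc1 : HasFDerivAt (fun y => f' y ((1:ℝ), (0:ℝ)))
      ((ContinuousLinearMap.apply ℝ ℝ ((1:ℝ), (0:ℝ))).comp B) x :=
    (ContinuousLinearMap.apply ℝ ℝ ((1:ℝ), (0:ℝ))).hasFDerivAt.comp x hf'd
  rw [e2, e1]
  rw [pd1_eq hc2, pd2_eq hc1]
  simpa using hsym
noncomputable def Phi (f : ℝ → ℝ) (t : ℝ) : ℝ := ∫ s in (0:ℝ)..t, f s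

noncomputable def FF (a : ℝ) (χ fm fp : ℝ → ℝ) (ψ : ℝ × ℝ → ℝ) (x : ℝ × ℝ) : ℝ :=
  χ (rr x - a) * fm (ψ x) + (1 - χ (rr x - a)) * fp (ψ x)

noncomputable def WW (fm fp : ℝ → ℝ) (ψ : ℝ × ℝ → ℝ) (x : ℝ × ℝ) : ℝ :=
  Phi fm (ψ x) - Phi fp (ψ x)

noncomputable def PhiFun (a : ℝ) (χ fm fp : ℝ → ℝ) (ψ : ℝ × ℝ → ℝ) (x : ℝ × ℝ) : ℝ :=
  χ (rr x - a) * Phi fm (ψ x) + (1 - χ (rr x - a)) * Phi fp (ψ x)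

lemma hasDerivAt_Phi {f : ℝ → ℝ} (hf : Continuous f) (t : ℝ) :
    HasDerivAt (Phi f) (f t) t := ftc hf t

lemma continuous_Phi {f : ℝ → ℝ} (hf : Continuous f) : Continuous (Phi f) :=
  Differentiable.continuous (fun t => (hasDerivAt_Phi hf t).differentiableAt)

lemma rr_ne_zero {x : ℝ × ℝ} (hx : x ≠ 0) : rr x ≠ 0 := (rr_pos hx).ne'

lemma ne_zero_of_rr {x : ℝ × ℝ} (h : rr x ≠ 0) : x ≠ 0 := by
  intro h0
  apply h
  rw [h0]
  show Real.sqrt ((0:ℝ) ^ 2 + (0:ℝ) ^ 2) = 0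
  norm_num

lemma circle_pt_ne_zero {r θ : ℝ} (hr : 0 < r) : (r * Real.cos θ, r * Real.sin θ) ≠ (0 : ℝ × ℝ) := by
  apply ne_zero_of_rr
  rw [rr_circle r θ hr.le]
  exact hr.ne'

section main
variable {a : ℝ} {χ fm fp : ℝ → ℝ} {ψ : ℝ × ℝ → ℝ}

lemma hasFDerivAt_psi (hψ : ContDiff ℝ 2 ψ) (x : ℝ × ℝ) :
    HasFDerivAt ψ (lm (pd1 ψ x) (pd2 ψ x)) x :=
  hasFDerivAt_pd ((hψ.differentiable (by norm_num)) x)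

lemma hasFDerivAt_WW (hfm : Continuous fm) (hfp : Continuous fp) (hψ : ContDiff ℝ 2 ψ)
    (x : ℝ × ℝ) :
    HasFDerivAt (WW fm fp ψ)
      (lm ((fm (ψ x) - fp (ψ x)) * pd1 ψ x) ((fm (ψ x) - fp (ψ x)) * pd2 ψ x)) x := by
  have hm := (hasDerivAt_Phi hfm (ψ x)).comp_hasFDerivAt x (hasFDerivAt_psi hψ x)
  have hp := (hasDerivAt_Phi hfp (ψ x)).comp_hasFDerivAt x (hasFDerivAt_psi hψ x)
  have h := hm.sub hp
  have he : fm (ψ x) • lm (pd1 ψ x) (pd2 ψ x) - fp (ψ x) • lm (pd1 ψ x) (pd2 ψ x)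
      = lm ((fm (ψ x) - fp (ψ x)) * pd1 ψ x) ((fm (ψ x) - fp (ψ x)) * pd2 ψ x) := by
    refine ContinuousLinearMap.ext fun y => ?_
    simp
    ring
  rw [he] at h
  exact h

lemma continuous_WW (hfm : Continuous fm) (hfp : Continuous fp) (hψc : Continuous ψ) :
    Continuous (WW fm fp ψ) :=
  ((continuous_Phi hfm).comp hψc).sub ((continuous_Phi hfp).comp hψc)

lemma continuous_FF (hχ : ContDiff ℝ (⊤ : ℕ∞) χ) (hfm : Continuous fm) (hfp : Continuous fp)
    (hψc : Continuous ψ) : Continuous (FF a χ fm fp ψ) := by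
  have h1 : Continuous fun x : ℝ × ℝ => χ (rr x - a) :=
    hχ.continuous.comp (continuous_rr.sub continuous_const)
  exact (h1.mul (hfm.comp hψc)).add ((continuous_const.sub h1).mul (hfp.comp hψc))

lemma hasFDerivAt_chi_rr (hχ : ContDiff ℝ (⊤ : ℕ∞) χ) {x : ℝ × ℝ} (hx : x ≠ 0) :
    HasFDerivAt (fun y => χ (rr y - a))
      (deriv χ (rr x - a) • lm (x.1 / rr x) (x.2 / rr x)) x := by
  have hd : HasDerivAt χ (deriv χ (rr x - a)) (rr x - a) :=
    (hχ.differentiable (by simp) (rr x - a)).hasDerivAt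
  exact hd.comp_hasFDerivAt x ((hasFDerivAt_rr hx).sub_const a)

lemma hasFDerivAt_PhiFun (hχ : ContDiff ℝ (⊤ : ℕ∞) χ) (hfm : Continuous fm) (hfp : Continuous fp)
    (hψ : ContDiff ℝ 2 ψ) {x : ℝ × ℝ} (hx : x ≠ 0) :
    HasFDerivAt (PhiFun a χ fm fp ψ)
      (lm (FF a χ fm fp ψ x * pd1 ψ x + deriv χ (rr x - a) * WW fm fp ψ x * (x.1 / rr x))
          (FF a χ fm fp ψ x * pd2 ψ x + deriv χ (rr x - a) * WW fm fp ψ x * (x.2 / rr x))) x := by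
  have hA := hasFDerivAt_chi_rr (a := a) hχ hx
  have hB := (hasDerivAt_Phi hfm (ψ x)).comp_hasFDerivAt x (hasFDerivAt_psi hψ x)
  have hC := (hasDerivAt_Phi hfp (ψ x)).comp_hasFDerivAt x (hasFDerivAt_psi hψ x)
  have h1A : HasFDerivAt (fun y => 1 - χ (rr y - a))
      (-(deriv χ (rr x - a) • lm (x.1 / rr x) (x.2 / rr x))) x := hA.const_sub 1
  have h := (hA.mul hB).add (h1A.mul hC)
  simp only [Function.comp_apply] at h
  have he : (χ (rr x - a) • (fm (ψ x) • lm (pd1 ψ x) (pd2 ψ x))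
        + Phi fm (ψ x) • (deriv χ (rr x - a) • lm (x.1 / rr x) (x.2 / rr x)))
      + ((1 - χ (rr x - a)) • (fp (ψ x) • lm (pd1 ψ x) (pd2 ψ x))
        + Phi fp (ψ x) • -(deriv χ (rr x - a) • lm (x.1 / rr x) (x.2 / rr x)))
      = lm (FF a χ fm fp ψ x * pd1 ψ x + deriv χ (rr x - a) * WW fm fp ψ x * (x.1 / rr x))
          (FF a χ fm fp ψ x * pd2 ψ x + deriv χ (rr x - a) * WW fm fp ψ x * (x.2 / rr x)) := by
    refine ContinuousLinearMap.ext fun y => ?_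
    simp [FF, WW]
    ring
  rw [he] at h
  exact h

lemma target_of_const (hfm : Continuous fm) (hfp : Continuous fp) (hψ : ContDiff ℝ 2 ψ)
    {x : ℝ × ℝ} (hx : x ≠ 0)
    (hconst : ∀ θ : ℝ, WW fm fp ψ (rr x * Real.cos θ, rr x * Real.sin θ) = WW fm fp ψ (rr x, 0)) :
    (fm (ψ x) - fp (ψ x)) * (pd2 ψ x * x.1 - pd1 ψ x * x.2) = 0 := by
  obtain ⟨θ, hθ1, hθ2⟩ := polar_rep hx
  have hpt : (rr x * Real.cos θ, rr x * Real.sin θ) = x := by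
    exact Prod.ext hθ1.symm hθ2.symm
  have hW : HasDerivAt (fun t => WW fm fp ψ (rr x * Real.cos t, rr x * Real.sin t))
      ((lm ((fm (ψ x) - fp (ψ x)) * pd1 ψ x) ((fm (ψ x) - fp (ψ x)) * pd2 ψ x))
        (-(rr x * Real.sin θ), rr x * Real.cos θ)) θ := by
    apply hasDerivAt_circle_comp
    rw [hpt]
    exact hasFDerivAt_WW hfm hfp hψ x
  have hWc : (fun t => WW fm fp ψ (rr x * Real.cos t, rr x * Real.sin t))
      = fun _ => WW fm fp ψ (rr x, 0) := funext hconst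
  have hderiv0 := hW.deriv
  rw [hWc, deriv_const] at hderiv0
  rw [lm_apply] at hderiv0
  simp only at hderiv0
  rw [← hθ1, ← hθ2] at hderiv0
  linear_combination -hderiv0
end main
lemma pd1_of_hasDerivAt {u : ℝ × ℝ → ℝ} {v : ℝ} {x : ℝ × ℝ}
    (h : HasDerivAt (fun s => u (s, x.2)) v x.1) : pd1 u x = v := h.deriv

lemma pd2_of_hasDerivAt {u : ℝ × ℝ → ℝ} {v : ℝ} {x : ℝ × ℝ}
    (h : HasDerivAt (fun s => u (x.1, s)) v x.2) : pd2 u x = v := h.deriv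

lemma pd1_neg (u : ℝ × ℝ → ℝ) (x : ℝ × ℝ) : pd1 (fun y => -(u y)) x = -(pd1 u x) := by
  simp only [pd1]
  exact deriv.neg

lemma pd2_neg (u : ℝ × ℝ → ℝ) (x : ℝ × ℝ) : pd2 (fun y => -(u y)) x = -(pd2 u x) := by
  simp only [pd2]
  exact deriv.neg

lemma grad_radial_const {u g : ℝ × ℝ → ℝ}
    (hu : ∀ y : ℝ × ℝ, y ≠ 0 → HasFDerivAt u (lm (g y * (y.1 / rr y)) (g y * (y.2 / rr y))) y) :
    ∀ y : ℝ × ℝ, y ≠ 0 → g y = g (rr y, 0) := by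
  have hcirc : ∀ r : ℝ, 0 < r → ∀ θ : ℝ, u (r * Real.cos θ, r * Real.sin θ) = u (r, 0) := by
    intro r hr θ
    have hW0 : ∀ t : ℝ, HasDerivAt (fun t => u (r * Real.cos t, r * Real.sin t)) 0 t := by
      intro t
      have h := hasDerivAt_circle_comp (θ := t) (hu _ (circle_pt_ne_zero (θ := t) hr))
      convert h using 1
      rw [lm_apply]
      simp only
      rw [rr_circle r t hr.le]
      field_simp
      ring
    have hconst := is_const_of_deriv_eq_zero
      (fun t => (hW0 t).differentiableAt) (fun t => (hW0 t).deriv) θ 0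
    simpa using hconst
  intro y hy
  obtain ⟨θ, hθ1, hθ2⟩ := polar_rep hy
  have hry := rr_pos hy
  have hpt : (rr y * Real.cos θ, rr y * Real.sin θ) = y := Prod.ext hθ1.symm hθ2.symm
  have h₁ : HasDerivAt (fun t => u (t * Real.cos θ, t * Real.sin θ)) (g y) (rr y) := by
    have h := hasDerivAt_ray_comp (c := Real.cos θ) (s := Real.sin θ) (t := rr y)
      (by rw [hpt]; exact hu y hy)
    convert h using 1
    rw [lm_apply]
    simp only
    rw [hθ1, hθ2, mul_div_cancel_left₀ _ hry.ne', mul_div_cancel_left₀ _ hry.ne']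
    linear_combination (-(g y)) * (Real.sin_sq_add_cos_sq θ)
  have hne' : ((rr y) * 1, (rr y) * 0) ≠ (0 : ℝ × ℝ) := by
    simp [Prod.ext_iff, hry.ne']
  have h₂ : HasDerivAt (fun t => u (t * 1, t * 0)) (g (rr y, 0)) (rr y) := by
    have h := hasDerivAt_ray_comp (hu _ hne')
    convert h using 1
    rw [lm_apply]
    simp only [mul_one, mul_zero]
    rw [rr_axis _ hry.le]
    field_simp
    ring
  have hee : (fun t => u (t * Real.cos θ, t * Real.sin θ))
      =ᶠ[nhds (rr y)] (fun t => u (t * 1, t * 0)) := by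
    filter_upwards [isOpen_Ioi.mem_nhds hry] with t ht
    rw [mul_one, mul_zero]
    exact hcirc t ht θ
  have hde := hee.deriv_eq
  rw [h₁.deriv, h₂.deriv] at hde
  exact hde

section glue
variable {a : ℝ} {χ fm fp : ℝ → ℝ} {ψ : ℝ × ℝ → ℝ}

lemma target_zero_at_zero :
    deriv χ (rr (0 : ℝ × ℝ) - a) * (fm (ψ 0) - fp (ψ 0))
      * ((pd2 ψ 0 * (0 : ℝ × ℝ).1 + -(pd1 ψ 0) * (0 : ℝ × ℝ).2) / rr (0 : ℝ × ℝ)) = 0 := by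
  have : rr (0 : ℝ × ℝ) = 0 := by
    show Real.sqrt ((0 : ℝ) ^ 2 + (0 : ℝ) ^ 2) = 0
    norm_num
  rw [this]
  norm_num

lemma forward_aux (hχ : ContDiff ℝ (⊤ : ℕ∞) χ) (hfm : Continuous fm) (hfp : Continuous fp)
    (hψ : ContDiff ℝ 2 ψ)
    {q : ℝ × ℝ → ℝ}
    (hq : ∀ y, HasFDerivAt q
      (lm (FF a χ fm fp ψ y * pd1 ψ y) (FF a χ fm fp ψ y * pd2 ψ y)) y)
    (x : ℝ × ℝ) :
    deriv χ (rr x - a) * (fm (ψ x) - fp (ψ x))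
      * ((pd2 ψ x * x.1 + -(pd1 ψ x) * x.2) / rr x) = 0 := by
  by_cases hx : x = 0
  · subst hx; exact target_zero_at_zero
  have hu : ∀ y : ℝ × ℝ, y ≠ 0 →
      HasFDerivAt (fun z => q z - PhiFun a χ fm fp ψ z)
        (lm ((fun z => -(deriv χ (rr z - a) * WW fm fp ψ z)) y * (y.1 / rr y))
            ((fun z => -(deriv χ (rr z - a) * WW fm fp ψ z)) y * (y.2 / rr y))) y := by
    intro y hy
    have h := (hq y).sub (hasFDerivAt_PhiFun (a := a) hχ hfm hfp hψ hy)
    refine h.congr_fderiv ?_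
    refine (ContinuousLinearMap.ext fun z => ?_)
    simp
    ring
  have hg := grad_radial_const hu
  by_cases hχ' : deriv χ (rr x - a) = 0
  · rw [hχ']; ring
  have hrx := rr_pos hx
  have hconst : ∀ θ : ℝ,
      WW fm fp ψ (rr x * Real.cos θ, rr x * Real.sin θ) = WW fm fp ψ (rr x, 0) := by
    intro θ
    have hne := circle_pt_ne_zero (θ := θ) hrx
    have h := hg _ hne
    rw [rr_circle _ _ hrx.le, rr_axis _ hrx.le] at h
    have h3 : deriv χ (rr x - a) * WW fm fp ψ (rr x * Real.cos θ, rr x * Real.sin θ)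
        = deriv χ (rr x - a) * WW fm fp ψ (rr x, 0) := by linear_combination -h
    exact mul_left_cancel₀ hχ' h3
  have hkey := target_of_const hfm hfp hψ hx hconst
  have : deriv χ (rr x - a) * (fm (ψ x) - fp (ψ x))
      * ((pd2 ψ x * x.1 + -(pd1 ψ x) * x.2) / rr x)
      = deriv χ (rr x - a) * ((fm (ψ x) - fp (ψ x)) * (pd2 ψ x * x.1 - pd1 ψ x * x.2)) / rr x := by
    ring
  rw [this, hkey, mul_zero, zero_div]

lemma reverse_wconst (hfm : Continuous fm) (hfp : Continuous fp) (hψ : ContDiff ℝ 2 ψ)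
    (hcond : ∀ y : ℝ × ℝ, deriv χ (rr y - a) * (fm (ψ y) - fp (ψ y))
      * ((pd2 ψ y * y.1 + -(pd1 ψ y) * y.2) / rr y) = 0)
    {x : ℝ × ℝ} (hx : x ≠ 0) (hχ' : deriv χ (rr x - a) ≠ 0) (θ : ℝ) :
    WW fm fp ψ (rr x * Real.cos θ, rr x * Real.sin θ) = WW fm fp ψ (rr x, 0) := by
  have hrx := rr_pos hx
  have hW0 : ∀ t : ℝ, HasDerivAt
      (fun t => WW fm fp ψ (rr x * Real.cos t, rr x * Real.sin t)) 0 t := by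
    intro t
    set y : ℝ × ℝ := (rr x * Real.cos t, rr x * Real.sin t) with hydef
    have hkey : (fm (ψ y) - fp (ψ y)) * (pd2 ψ y * y.1 - pd1 ψ y * y.2) = 0 := by
      have h := hcond y
      rw [hydef] at h ⊢
      simp only at h ⊢
      rw [rr_circle _ _ hrx.le] at h
      rcases mul_eq_zero.1 h with h' | h'
      · rcases mul_eq_zero.1 h' with h'' | h''
        · exact absurd h'' hχ'
        · rw [h'']; ring
      · rcases div_eq_zero_iff.1 h' with h'' | h''
        · linear_combination (fm (ψ (rr x * Real.cos t, rr x * Real.sin t))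
            - fp (ψ (rr x * Real.cos t, rr x * Real.sin t))) * h''
        · exact absurd h'' hrx.ne'
    have h := hasDerivAt_circle_comp (hasFDerivAt_WW hfm hfp hψ y)
    convert h using 1
    rw [lm_apply]
    simp only
    rw [hydef] at hkey
    simp only at hkey
    linear_combination -hkey
  have hconst := is_const_of_deriv_eq_zero
    (fun t => (hW0 t).differentiableAt) (fun t => (hW0 t).deriv) θ 0
  simpa using hconst

lemma hasFDerivAt_G (hχ : ContDiff ℝ (⊤ : ℕ∞) χ) (hfm : Continuous fm) (hfp : Continuous fp)
    (hψ : ContDiff ℝ 2 ψ)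
    (hcond : ∀ y : ℝ × ℝ, deriv χ (rr y - a) * (fm (ψ y) - fp (ψ y))
      * ((pd2 ψ y * y.1 + -(pd1 ψ y) * y.2) / rr y) = 0)
    {x : ℝ × ℝ} (hx : x ≠ 0) :
    HasFDerivAt (fun y => ∫ s in (0:ℝ)..(rr y), deriv χ (s - a) * WW fm fp ψ (s, 0))
      (lm (deriv χ (rr x - a) * WW fm fp ψ x * (x.1 / rr x))
          (deriv χ (rr x - a) * WW fm fp ψ x * (x.2 / rr x))) x := by
  have hg₀c : Continuous (fun s : ℝ => deriv χ (s - a) * WW fm fp ψ (s, 0)) := by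
    have h1 : Continuous (deriv χ) := hχ.continuous_deriv (by simp)
    exact (h1.comp (continuous_id.sub continuous_const)).mul
      ((continuous_WW hfm hfp hψ.continuous).comp (continuous_id.prodMk continuous_const))
  have h := (ftc hg₀c (rr x)).comp_hasFDerivAt x (hasFDerivAt_rr hx)
  have hkey : deriv χ (rr x - a) * WW fm fp ψ (rr x, 0)
      = deriv χ (rr x - a) * WW fm fp ψ x := by
    by_cases hχ' : deriv χ (rr x - a) = 0
    · rw [hχ']; ring
    · congr 1
      obtain ⟨θ, hθ1, hθ2⟩ := polar_rep hx
      have hpt : (rr x * Real.cos θ, rr x * Real.sin θ) = x := Prod.ext hθ1.symm hθ2.symm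
      have hw := reverse_wconst hfm hfp hψ hcond hx hχ' θ
      rw [hpt] at hw
      exact hw.symm
  refine h.congr_fderiv ?_
  refine (ContinuousLinearMap.ext fun z => ?_)
  simp
  rw [← hkey]
  ring

lemma reverse_aux (hψ : ContDiff ℝ 2 ψ)
    (heq' : ∀ y, pd1 (pd1 ψ) y + pd2 (pd2 ψ) y + FF a χ fm fp ψ y = 0)
    {q : ℝ × ℝ → ℝ}
    (hq : ∀ y, HasFDerivAt q
      (lm (FF a χ fm fp ψ y * pd1 ψ y) (FF a χ fm fp ψ y * pd2 ψ y)) y) :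
    ∃ p : ℝ × ℝ → ℝ, Differentiable ℝ p ∧
      ∀ x : ℝ × ℝ,
        (pd2 ψ x * pd1 (pd2 ψ) x + (-(pd1 ψ x)) * pd2 (pd2 ψ) x + pd1 p x = 0) ∧
        (pd2 ψ x * pd1 (fun y => -(pd1 ψ y)) x
            + (-(pd1 ψ x)) * pd2 (fun y => -(pd1 ψ y)) x + pd2 p x = 0) ∧
        (pd1 (pd2 ψ) x + pd2 (fun y => -(pd1 ψ y)) x = 0) := by
  have hψ1d : Differentiable ℝ (pd1 ψ) := (contDiff_pd1 hψ).differentiable (by norm_num)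
  have hψ2d : Differentiable ℝ (pd2 ψ) := (contDiff_pd2 hψ).differentiable (by norm_num)
  refine ⟨fun y => -((pd1 ψ y * pd1 ψ y + pd2 ψ y * pd2 ψ y) / 2) - q y, ?_, ?_⟩
  · have hqd : Differentiable ℝ q := fun z => (hq z).differentiableAt
    fun_prop
  intro x
  have hs1 := (((((hasDerivAt_pd1 (hψ1d x)).mul (hasDerivAt_pd1 (hψ1d x))).add
      ((hasDerivAt_pd1 (hψ2d x)).mul (hasDerivAt_pd1 (hψ2d x)))).div_const (2:ℝ)).neg).sub
      (hasDerivAt_slice1 (hq x))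
  have hs2 := (((((hasDerivAt_pd2 (hψ1d x)).mul (hasDerivAt_pd2 (hψ1d x))).add
      ((hasDerivAt_pd2 (hψ2d x)).mul (hasDerivAt_pd2 (hψ2d x)))).div_const (2:ℝ)).neg).sub
      (hasDerivAt_slice2 (hq x))
  have e1 := pd1_of_hasDerivAt
    (u := fun y => -((pd1 ψ y * pd1 ψ y + pd2 ψ y * pd2 ψ y) / 2) - q y) (x := x) hs1
  have e2 := pd2_of_hasDerivAt
    (u := fun y => -((pd1 ψ y * pd1 ψ y + pd2 ψ y * pd2 ψ y) / 2) - q y) (x := x) hs2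
  rw [lm_apply] at e1 e2
  simp only [Prod.mk.eta, mul_one, mul_zero, add_zero, zero_add] at e1 e2
  have hcl := clairaut hψ x
  refine ⟨?_, ?_, ?_⟩
  · rw [e1]
    linear_combination (-(pd1 ψ x)) * heq' x
  · rw [pd1_neg, pd2_neg, e2]
    linear_combination (-(pd2 ψ x)) * heq' x
  · rw [pd2_neg, hcl]
    ring
end glue

/-- For a compactly supported `C²` solution `ψ` of
`Δψ + χ(|x|-a) fm(ψ) + (1-χ(|x|-a)) fp(ψ) = 0`, the vector field
`v = ∇⊥ψ = (∂₂ψ, -∂₁ψ)` solves the stationary incompressible Euler equations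
(for some pressure) iff `χ'(|x|-a)[fm(ψ)-fp(ψ)] (∇⊥ψ · e_r) = 0` everywhere. -/
theorem stmt0 (a : ℝ) (χ fm fp : ℝ → ℝ)
    (hχ : ContDiff ℝ (⊤ : ℕ∞) χ)
    (hχ0 : ∀ s ≤ (-1 : ℝ), χ s = 0) (hχ1 : ∀ s, (1 : ℝ) ≤ s → χ s = 1)
    (hfm : Continuous fm) (hfp : Continuous fp)
    (ψ : ℝ × ℝ → ℝ) (hψ : ContDiff ℝ 2 ψ) (hsupp : HasCompactSupport ψ)
    (heq : ∀ x : ℝ × ℝ,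
      pd1 (pd1 ψ) x + pd2 (pd2 ψ) x
        + (χ (Real.sqrt (x.1 ^ 2 + x.2 ^ 2) - a) * fm (ψ x)
            + (1 - χ (Real.sqrt (x.1 ^ 2 + x.2 ^ 2) - a)) * fp (ψ x)) = 0) :
    (∃ p : ℝ × ℝ → ℝ, Differentiable ℝ p ∧
      ∀ x : ℝ × ℝ,
        (pd2 ψ x * pd1 (pd2 ψ) x + (-(pd1 ψ x)) * pd2 (pd2 ψ) x + pd1 p x = 0) ∧
        (pd2 ψ x * pd1 (fun y => -(pd1 ψ y)) x
            + (-(pd1 ψ x)) * pd2 (fun y => -(pd1 ψ y)) x + pd2 p x = 0) ∧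
        (pd1 (pd2 ψ) x + pd2 (fun y => -(pd1 ψ y)) x = 0))
    ↔ ∀ x : ℝ × ℝ,
        deriv χ (Real.sqrt (x.1 ^ 2 + x.2 ^ 2) - a) * (fm (ψ x) - fp (ψ x))
          * ((pd2 ψ x * x.1 + (-(pd1 ψ x)) * x.2) / Real.sqrt (x.1 ^ 2 + x.2 ^ 2)) = 0 := by
  have heq' : ∀ y : ℝ × ℝ, pd1 (pd1 ψ) y + pd2 (pd2 ψ) y + FF a χ fm fp ψ y = 0 := heq
  have hψ1d : Differentiable ℝ (pd1 ψ) := (contDiff_pd1 hψ).differentiable (by norm_num)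
  have hψ2d : Differentiable ℝ (pd2 ψ) := (contDiff_pd2 hψ).differentiable (by norm_num)
  constructor
  · rintro ⟨p, hpdiff, hpe⟩
    intro x
    have hq : ∀ y : ℝ × ℝ, HasFDerivAt
        (fun z => -p z - (pd1 ψ z * pd1 ψ z + pd2 ψ z * pd2 ψ z) * (1/2 : ℝ))
        (lm (FF a χ fm fp ψ y * pd1 ψ y) (FF a χ fm fp ψ y * pd2 ψ y)) y := by
      intro y
      have hpe1 := (hpe y).1
      have hpe2' := (hpe y).2.1
      rw [pd1_neg, pd2_neg] at hpe2'
      have h := ((hasFDerivAt_pd (hpdiff y)).neg).sub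
        ((((hasFDerivAt_pd (hψ1d y)).mul (hasFDerivAt_pd (hψ1d y))).add
          ((hasFDerivAt_pd (hψ2d y)).mul (hasFDerivAt_pd (hψ2d y)))).mul_const ((1/2 : ℝ)))
      refine h.congr_fderiv ?_
      refine (ContinuousLinearMap.ext fun z => ?_).symm
      simp
      linear_combination (z.1) * hpe1 + (z.2) * hpe2'
        + (pd1 ψ y * z.1 + pd2 ψ y * z.2) * heq' y
    exact forward_aux hχ hfm hfp hψ hq x
  · intro hcond
    have hcond' : ∀ y : ℝ × ℝ, deriv χ (rr y - a) * (fm (ψ y) - fp (ψ y))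
        * ((pd2 ψ y * y.1 + -(pd1 ψ y) * y.2) / rr y) = 0 := hcond
    have hchicont : Continuous fun y : ℝ × ℝ => χ (rr y - a) :=
      hχ.continuous.comp (continuous_rr.sub continuous_const)
    have hΦc : Continuous (PhiFun a χ fm fp ψ) :=
      (hchicont.mul ((continuous_Phi hfm).comp hψ.continuous)).add
        ((continuous_const.sub hchicont).mul ((continuous_Phi hfp).comp hψ.continuous))
    have hg₀c : Continuous (fun s : ℝ => deriv χ (s - a) * WW fm fp ψ (s, 0)) :=
      ((hχ.continuous_deriv (by simp)).comp (continuous_id.sub continuous_const)).mul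
        ((continuous_WW hfm hfp hψ.continuous).comp (continuous_id.prodMk continuous_const))
    have hGc : Continuous (fun y : ℝ × ℝ =>
        ∫ s in (0:ℝ)..(rr y), deriv χ (s - a) * WW fm fp ψ (s, 0)) :=
      (Differentiable.continuous (fun r => (ftc hg₀c r).differentiableAt)).comp continuous_rr
    have hqd : ∀ y : ℝ × ℝ, y ≠ 0 → HasFDerivAt
        (fun z => PhiFun a χ fm fp ψ z
          - ∫ s in (0:ℝ)..(rr z), deriv χ (s - a) * WW fm fp ψ (s, 0))
        (lm (FF a χ fm fp ψ y * pd1 ψ y) (FF a χ fm fp ψ y * pd2 ψ y)) y := by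
      intro y hy
      have h := (hasFDerivAt_PhiFun (a := a) hχ hfm hfp hψ hy).sub
        (hasFDerivAt_G (a := a) hχ hfm hfp hψ hcond' hy)
      refine h.congr_fderiv ?_
      refine (ContinuousLinearMap.ext fun z => ?_).symm
      simp
      ring
    have hLc : Continuous fun y : ℝ × ℝ =>
        lm (FF a χ fm fp ψ y * pd1 ψ y) (FF a χ fm fp ψ y * pd2 ψ y) := by
      have hα : Continuous fun y : ℝ × ℝ => FF a χ fm fp ψ y * pd1 ψ y :=
        (continuous_FF hχ hfm hfp hψ.continuous).mul (contDiff_pd1 hψ).continuous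
      have hβ : Continuous fun y : ℝ × ℝ => FF a χ fm fp ψ y * pd2 ψ y :=
        (continuous_FF hχ hfm hfp hψ.continuous).mul (contDiff_pd2 hψ).continuous
      exact (hα.smul continuous_const).add (hβ.smul continuous_const)
    have hq0 := hasFDerivAt_zero_of_continuousAt
      (u := fun z => PhiFun a χ fm fp ψ z
          - ∫ s in (0:ℝ)..(rr z), deriv χ (s - a) * WW fm fp ψ (s, 0))
      (L := fun y => lm (FF a χ fm fp ψ y * pd1 ψ y) (FF a χ fm fp ψ y * pd2 ψ y))
      ((hΦc.sub hGc).continuousAt) (hLc.continuousAt) hqd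
    have hq : ∀ y : ℝ × ℝ, HasFDerivAt
        (fun z => PhiFun a χ fm fp ψ z
          - ∫ s in (0:ℝ)..(rr z), deriv χ (s - a) * WW fm fp ψ (s, 0))
        (lm (FF a χ fm fp ψ y * pd1 ψ y) (FF a χ fm fp ψ y * pd2 ψ y)) y := by
      intro y
      by_cases hy : y = 0
      · subst hy; exact hq0
      · exact hqd y hy
    exact reverse_aux hψ heq' hq
end

section
/- Let a > 3 and let τ_a(r) = [(a₊² − a₋²) log r − (r² − a₋²) log a₊ − (a₊² − r²) log a₋] / (4 log a₊ − 4 log a₋) with a₋ = a−3, a₊ = a+3. Then as a → ∞, the translated functions r ↦ τ_a(r + a − 4) converge uniformly on [1,7] to the function τ̄(r) = (9 − (r−4)²)/2, which satisfies τ̄'' + 1 = 0 on (1,7) with τ̄(1) = τ̄(7) = 0. -/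
/-!
The torsion function of the annulus `a - 3 < |z| < a + 3` has radial second derivative
`τ'' = -1/2 - κ/x²` with `κ = 3a / log ((a + 3)/(a - 3))`, and
`6/(a + 3) ≤ log ((a + 3)/(a - 3)) ≤ 6/(a - 3)` gives `|τ'' + 1| ≤ 18/a` on `[a - 3, a + 3]`.
A function vanishing at the ends of an interval whose second derivative is within `ε` of `-1`
is squeezed, by concavity, between `(1 ∓ ε)` times the torsion function `(x - u)(v - x)/2` of the
interval. After recentering, the torsion function of the annulus is therefore within `81/a` of
`(9 - (r - 4)²)/2` on `[1, 7]`.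
-/

open Real Set Filter Topology

lemma tendstoUniformlyOn_of_dist_le {ι β α : Type*} [PseudoMetricSpace α] {F : ι → β → α}
    {f : β → α} {p : Filter ι} {s : Set β} {δ : ι → ℝ} (hδ : Tendsto δ p (𝓝 0))
    (h : ∀ᶠ i in p, ∀ x ∈ s, dist (f x) (F i x) ≤ δ i) : TendstoUniformlyOn F f p s := by
  rw [Metric.tendstoUniformlyOn_iff]
  intro ε hε
  filter_upwards [h, hδ (Iio_mem_nhds hε)] with i hi hδi x hx
  exact (hi x hx).trans_lt hδi

namespace Real

lemma sub_div_le_log_sub_log {x y : ℝ} (hx : 0 < x) (hy : 0 < y) :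
    (y - x) / y ≤ log y - log x := by
  have := one_sub_inv_le_log_of_pos (div_pos hy hx)
  rwa [log_div hy.ne' hx.ne', inv_div, one_sub_div hy.ne'] at this

lemma log_sub_log_le_sub_div {x y : ℝ} (hx : 0 < x) (hy : 0 < y) :
    log y - log x ≤ (y - x) / x := by
  have := log_le_sub_one_of_pos (div_pos hy hx)
  rwa [log_div hy.ne' hx.ne', div_sub_one hx.ne'] at this

end Real

noncomputable def intervalTorsion (u v x : ℝ) : ℝ := (x - u) * (v - x) / 2

lemma hasDerivAt_intervalTorsion (u v x : ℝ) :
    HasDerivAt (intervalTorsion u v) ((u + v) / 2 - x) x :=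
  ((((hasDerivAt_id' x).sub_const u).mul ((hasDerivAt_id' x).const_sub v)).div_const 2).congr_deriv
    (by ring)

lemma intervalTorsion_le (u v x : ℝ) : intervalTorsion u v x ≤ (v - u) ^ 2 / 8 := by
  unfold intervalTorsion
  nlinarith [sq_nonneg (2 * x - u - v)]

lemma deriv_deriv_intervalTorsion (u v x : ℝ) : deriv (deriv (intervalTorsion u v)) x = -1 := by
  have : deriv (intervalTorsion u v) = fun x => (u + v) / 2 - x :=
    funext fun x => (hasDerivAt_intervalTorsion u v x).deriv
  rw [this]
  simp

lemma mul_intervalTorsion_le {f f' f'' : ℝ → ℝ} {u v m x : ℝ}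
    (hf : ContinuousOn f (Icc u v)) (hf' : ∀ y ∈ Ioo u v, HasDerivAt f (f' y) y)
    (hf'' : ∀ y ∈ Ioo u v, HasDerivAt f' (f'' y) y)
    (hu : f u = 0) (hv : f v = 0) (hm : ∀ y ∈ Ioo u v, m ≤ -f'' y) (hx : x ∈ Icc u v) :
    m * intervalTorsion u v x ≤ f x := by
  have huv : u ≤ v := hx.1.trans hx.2
  have hconc : ConcaveOn ℝ (Icc u v) (fun y => f y - m * intervalTorsion u v y) := by
    refine concaveOn_of_hasDerivWithinAt2_nonpos (f' := fun y => f' y - m * ((u + v) / 2 - y))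
      (f'' := fun y => f'' y + m) (convex_Icc u v)
      (hf.sub fun y _ =>
        ((hasDerivAt_intervalTorsion u v y).continuousAt.const_mul m).continuousWithinAt)
      (fun y hy => ?_) (fun y hy => ?_) (fun y hy => ?_) <;> rw [interior_Icc] at hy
    · exact ((hf' y hy).sub ((hasDerivAt_intervalTorsion u v y).const_mul m)).hasDerivWithinAt
    · exact ((hf'' y hy).sub (((hasDerivAt_id' y).const_sub _).const_mul m)).congr_deriv
        (by ring) |>.hasDerivWithinAt
    · linarith [hm y hy]
  have := hconc.ge_on_segment (left_mem_Icc.2 huv) (right_mem_Icc.2 huv)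
    ((segment_eq_Icc huv).symm ▸ hx)
  simp only [intervalTorsion, hu, hv, sub_self, zero_mul, mul_zero, zero_div, min_self] at this
  unfold intervalTorsion
  linarith

lemma abs_sub_intervalTorsion_le {f f' f'' : ℝ → ℝ} {u v ε x : ℝ}
    (hf : ContinuousOn f (Icc u v)) (hf' : ∀ y ∈ Ioo u v, HasDerivAt f (f' y) y)
    (hf'' : ∀ y ∈ Ioo u v, HasDerivAt f' (f'' y) y) (hu : f u = 0) (hv : f v = 0)
    (hε : ∀ y ∈ Ioo u v, |f'' y + 1| ≤ ε) (hx : x ∈ Icc u v) :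
    |f x - intervalTorsion u v x| ≤ ε * intervalTorsion u v x := by
  have hlower := mul_intervalTorsion_le (m := 1 - ε) hf hf' hf'' hu hv
    (fun y hy => by linarith [(abs_le.1 (hε y hy)).2]) hx
  have hupper := mul_intervalTorsion_le (f := -f) (m := -(1 + ε)) hf.neg
    (fun y hy => (hf' y hy).neg) (fun y hy => (hf'' y hy).neg) (by simp [hu]) (by simp [hv])
    (fun y hy => by simp only [neg_neg]; linarith [(abs_le.1 (hε y hy)).1]) hx
  rw [abs_le]
  constructor <;> simp only [Pi.neg_apply] at hupper <;> linarith

/-- Radial profile of the torsion function of the annulus `r₁ < |z| < r₂`: it solves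
`τ'' + τ'/x = -1` with `τ r₁ = τ r₂ = 0`. -/
noncomputable def annulusTorsion (r₁ r₂ x : ℝ) : ℝ :=
  ((r₂ ^ 2 - r₁ ^ 2) * log x - (x ^ 2 - r₁ ^ 2) * log r₂ - (r₂ ^ 2 - x ^ 2) * log r₁) /
    (4 * log r₂ - 4 * log r₁)

lemma annulusTorsion_left (r₁ r₂ : ℝ) : annulusTorsion r₁ r₂ r₁ = 0 := by
  simp [annulusTorsion]

lemma annulusTorsion_right (r₁ r₂ : ℝ) : annulusTorsion r₁ r₂ r₂ = 0 := by
  simp [annulusTorsion]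

lemma hasDerivAt_annulusTorsion {r₁ r₂ x : ℝ} (hr : log r₁ ≠ log r₂) (hx : x ≠ 0) :
    HasDerivAt (annulusTorsion r₁ r₂)
      ((r₂ ^ 2 - r₁ ^ 2) / (4 * (log r₂ - log r₁)) / x - x / 2) x := by
  have hL : log r₂ - log r₁ ≠ 0 := sub_ne_zero.2 hr.symm
  have := (((((hasDerivAt_log hx).const_mul (r₂ ^ 2 - r₁ ^ 2)).sub
    (((hasDerivAt_pow 2 x).sub_const (r₁ ^ 2)).mul_const (log r₂))).sub
    (((hasDerivAt_pow 2 x).const_sub (r₂ ^ 2)).mul_const (log r₁))).div_const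
    (4 * log r₂ - 4 * log r₁))
  refine this.congr_deriv ?_
  field_simp
  ring

lemma abs_half_sub_annulus_coeff_le {a x : ℝ} (ha : 6 ≤ a) (hx : x ∈ Icc (a - 3) (a + 3)) :
    |1 / 2 - ((a + 3) ^ 2 - (a - 3) ^ 2) / (4 * (log (a + 3) - log (a - 3))) / x ^ 2|
      ≤ 18 / a := by
  obtain ⟨hx₁, hx₂⟩ := hx
  have h₃ : 0 < a - 3 := by linarith
  set L := log (a + 3) - log (a - 3)
  have hL₁ : 6 / (a + 3) ≤ L := by
    convert Real.sub_div_le_log_sub_log h₃ (by linarith : 0 < a + 3) using 2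
    ring
  have hL₂ : L ≤ 6 / (a - 3) := by
    convert Real.log_sub_log_le_sub_div h₃ (by linarith : 0 < a + 3) using 2
    ring
  have hL : 0 < L := (by positivity : (0 : ℝ) < 6 / (a + 3)).trans_le hL₁
  have hLx : 0 < L * x ^ 2 := mul_pos hL (pow_pos (by linarith) 2)
  have hlo : 6 / (a + 3) * (a - 3) ^ 2 ≤ L * x ^ 2 :=
    mul_le_mul hL₁ (pow_le_pow_left₀ h₃.le hx₁ 2) (by positivity) hL.le
  have hhi : L * x ^ 2 ≤ 6 / (a - 3) * (a + 3) ^ 2 :=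
    mul_le_mul hL₂ (pow_le_pow_left₀ (by linarith) hx₂ 2) (by positivity) (by positivity)
  have hcoeff : ((a + 3) ^ 2 - (a - 3) ^ 2) / (4 * L) / x ^ 2 = 3 * a / (L * x ^ 2) := by
    field_simp
    ring
  rw [hcoeff, abs_sub_le_iff]
  constructor
  · calc 1 / 2 - 3 * a / (L * x ^ 2)
        ≤ 1 / 2 - 3 * a / (6 / (a - 3) * (a + 3) ^ 2) := by gcongr
      _ = (9 * a + 9) / (2 * (a + 3) ^ 2) := by field_simp; ring
      _ ≤ 18 / a := by
        rw [div_le_div_iff₀ (by positivity) (by positivity)]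
        nlinarith
  · calc 3 * a / (L * x ^ 2) - 1 / 2
        ≤ 3 * a / (6 / (a + 3) * (a - 3) ^ 2) - 1 / 2 := by gcongr
      _ = (9 * a - 9) / (2 * (a - 3) ^ 2) := by field_simp; ring
      _ ≤ 18 / a := by
        rw [div_le_div_iff₀ (by positivity) (by positivity)]
        nlinarith

lemma abs_annulusTorsion_sub_intervalTorsion_le {a x : ℝ} (ha : 6 ≤ a)
    (hx : x ∈ Icc (a - 3) (a + 3)) :
    |annulusTorsion (a - 3) (a + 3) x - intervalTorsion (a - 3) (a + 3) x|
      ≤ 18 / a * intervalTorsion (a - 3) (a + 3) x := by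
  set κ := ((a + 3) ^ 2 - (a - 3) ^ 2) / (4 * (log (a + 3) - log (a - 3)))
  have hpos : ∀ y ∈ Icc (a - 3) (a + 3), y ≠ 0 := fun y hy => by linarith [hy.1]
  have hlog : log (a - 3) ≠ log (a + 3) := (log_lt_log (by linarith) (by linarith)).ne
  refine abs_sub_intervalTorsion_le (f' := fun y => κ / y - y / 2)
    (f'' := fun y => -κ / y ^ 2 - 1 / 2)
    (fun y hy => (hasDerivAt_annulusTorsion hlog (hpos y hy)).continuousAt.continuousWithinAt)
    (fun y hy => hasDerivAt_annulusTorsion hlog (hpos y (Ioo_subset_Icc_self hy)))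
    (fun y hy => ?_) (annulusTorsion_left _ _) (annulusTorsion_right _ _)
    (fun y hy => ?_) hx
  · exact (((hasDerivAt_inv (hpos y (Ioo_subset_Icc_self hy))).const_mul κ).sub
      ((hasDerivAt_id' y).div_const 2)).congr_deriv (by ring)
  · convert abs_half_sub_annulus_coeff_le ha (Ioo_subset_Icc_self hy) using 2
    ring

/-- the recentered torsion functions `r ↦ τ_a(r + a - 4)` converge uniformly on
`[1,7]`, as `a → ∞`, to `τ̄(r) = (9 - (r-4)²)/2`, which solves `τ̄'' + 1 = 0` on `(1,7)`
with `τ̄(1) = τ̄(7) = 0`. -/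
theorem stmt2 :
    TendstoUniformlyOn
      (fun (a : ℝ) (r : ℝ) =>
        (((a + 3) ^ 2 - (a - 3) ^ 2) * Real.log (r + a - 4)
          - ((r + a - 4) ^ 2 - (a - 3) ^ 2) * Real.log (a + 3)
          - ((a + 3) ^ 2 - (r + a - 4) ^ 2) * Real.log (a - 3))
        / (4 * Real.log (a + 3) - 4 * Real.log (a - 3)))
      (fun r => (9 - (r - 4) ^ 2) / 2) atTop (Icc 1 7)
    ∧ (∀ r ∈ Ioo (1 : ℝ) 7,
        deriv (deriv (fun s : ℝ => (9 - (s - 4) ^ 2) / 2)) r + 1 = 0)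
    ∧ (9 - ((1 : ℝ) - 4) ^ 2) / 2 = 0 ∧ (9 - ((7 : ℝ) - 4) ^ 2) / 2 = 0 := by
  have hlimit : (fun r : ℝ => (9 - (r - 4) ^ 2) / 2) = intervalTorsion 1 7 := by
    funext r
    unfold intervalTorsion
    ring
  refine ⟨?_, fun r _ => by rw [hlimit, deriv_deriv_intervalTorsion]; norm_num, by norm_num,
    by norm_num⟩
  refine tendstoUniformlyOn_of_dist_le (δ := fun a => 81 / a)
    (tendsto_const_nhds.div_atTop tendsto_id) ?_
  filter_upwards [eventually_ge_atTop 6] with a ha r hr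
  have hx : r + a - 4 ∈ Icc (a - 3) (a + 3) := ⟨by linarith [hr.1], by linarith [hr.2]⟩
  have hshift : (9 - (r - 4) ^ 2) / 2 = intervalTorsion (a - 3) (a + 3) (r + a - 4) := by
    unfold intervalTorsion
    ring
  rw [dist_comm, Real.dist_eq, hshift]
  calc |annulusTorsion (a - 3) (a + 3) (r + a - 4) - intervalTorsion (a - 3) (a + 3) (r + a - 4)|
      ≤ 18 / a * intervalTorsion (a - 3) (a + 3) (r + a - 4) :=
        abs_annulusTorsion_sub_intervalTorsion_le ha hx
    _ ≤ 18 / a * ((a + 3 - (a - 3)) ^ 2 / 8) := by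
        gcongr
        exact intervalTorsion_le _ _ _
    _ = 81 / a := by ring
end

section
/- For every integer k ≥ 1 there is a constant C > 0 such that every f ∈ C^k([0,1]) with f(0) = f'(0) = ⋯ = f^{(k−1)}(0) = 0 satisfies ∫₀¹ f(t)² t^{−2k} dt ≤ C ∫₀¹ f^{(k)}(t)² dt. -/
open Real Set MeasureTheory


lemma rpow_sq (s : ℝ) (hs : 0 ≤ s) (c : ℝ) : (s ^ c) ^ (2:ℝ) = s ^ (2*c) := by
  rw [← Real.rpow_mul hs]; ring_nf

lemma cs_step (h : ℝ → ℝ) (hc : Continuous h) {t : ℝ} (ht : t ∈ Ioo (0:ℝ) 1) :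
    ENNReal.ofReal ((∫ s in Ioo 0 t, h s) ^ 2)
      ≤ ENNReal.ofReal (2 * t ^ (1/2 : ℝ)) *
        ∫⁻ s in Ioo (0:ℝ) t, ENNReal.ofReal (s ^ (1/2 : ℝ) * h s ^ 2) := by
  obtain ⟨ht0, ht1⟩ := ht
  set φ : ℝ → ENNReal := fun s => ENNReal.ofReal (s ^ (-(1/4) : ℝ)) with hφ
  set ψ : ℝ → ENNReal := fun s => ENNReal.ofReal (s ^ ((1/4) : ℝ) * |h s|) with hψ
  have hint : IntegrableOn h (Ioo 0 t) := (hc.integrableOn_Icc (a := 0) (b := t)).mono_set Ioo_subset_Icc_self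
  have step1 : ENNReal.ofReal ((∫ s in Ioo 0 t, h s) ^ 2)
      ≤ (∫⁻ s in Ioo (0:ℝ) t, ENNReal.ofReal |h s|) ^ 2 := by
    rw [← ofReal_integral_eq_lintegral_ofReal hint.abs
      (Filter.Eventually.of_forall fun s => abs_nonneg _), ← ENNReal.ofReal_pow
      (integral_nonneg fun s => abs_nonneg _)]
    apply ENNReal.ofReal_le_ofReal
    calc (∫ s in Ioo 0 t, h s) ^ 2 = |∫ s in Ioo 0 t, h s| ^ 2 := (sq_abs _).symm
    _ ≤ (∫ s in Ioo 0 t, |h s|) ^ 2 := by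
        apply pow_le_pow_left₀ (abs_nonneg _)
        simpa using norm_integral_le_integral_norm (μ := volume.restrict (Ioo 0 t)) h
  have step2 : (∫⁻ s in Ioo (0:ℝ) t, ENNReal.ofReal |h s|) = ∫⁻ s in Ioo (0:ℝ) t, φ s * ψ s := by
    apply setLIntegral_congr_fun measurableSet_Ioo
    intro s hs
    beta_reduce
    rw [hφ, hψ, ← ENNReal.ofReal_mul (Real.rpow_nonneg hs.1.le _)]
    congr 1
    rw [← mul_assoc, ← Real.rpow_add hs.1]
    norm_num
  have hφm : AEMeasurable φ (volume.restrict (Ioo (0:ℝ) t)) := by fun_prop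
  have hψm : AEMeasurable ψ (volume.restrict (Ioo (0:ℝ) t)) := by
    have m1 : Measurable fun s:ℝ => s ^ ((1/4):ℝ) := by fun_prop
    exact ((m1.mul hc.measurable.abs).ennreal_ofReal).aemeasurable
  have holder := ENNReal.lintegral_mul_le_Lp_mul_Lq (volume.restrict (Ioo (0:ℝ) t))
    (Real.holderConjugate_iff_eq_conjExponent (by norm_num) |>.mpr (by norm_num) : Real.HolderConjugate 2 2)
    hφm hψm
  have hφ2 : ∫⁻ s in Ioo (0:ℝ) t, φ s ^ (2:ℝ) = ENNReal.ofReal (2 * t ^ (1/2 : ℝ)) := by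
    have e1 : ∫⁻ s in Ioo (0:ℝ) t, φ s ^ (2:ℝ) = ∫⁻ s in Ioo (0:ℝ) t, ENNReal.ofReal (s ^ (-(1/2) : ℝ)) := by
      apply setLIntegral_congr_fun measurableSet_Ioo
      intro s hs
      show ENNReal.ofReal (s ^ (-(1/4) : ℝ)) ^ (2:ℝ) = _
      rw [ENNReal.ofReal_rpow_of_nonneg (Real.rpow_nonneg hs.1.le _) (by norm_num),
        rpow_sq s hs.1.le]
      norm_num
    have hii : IntervalIntegrable (fun s : ℝ => s ^ (-(1/2) : ℝ)) volume 0 t :=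
      intervalIntegral.intervalIntegrable_rpow' (by norm_num)
    have hio : IntegrableOn (fun s : ℝ => s ^ (-(1/2) : ℝ)) (Ioo 0 t) := by
      rw [intervalIntegrable_iff_integrableOn_Ioo_of_le ht0.le] at hii
      exact hii
    rw [e1, ← ofReal_integral_eq_lintegral_ofReal hio]
    · congr 1
      rw [← integral_Ioc_eq_integral_Ioo, ← intervalIntegral.integral_of_le ht0.le,
        integral_rpow (Or.inl (by norm_num))]
      rw [Real.zero_rpow (by norm_num)]
      ring_nf
    · filter_upwards [ae_restrict_mem measurableSet_Ioo] with s hs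
      exact Real.rpow_nonneg hs.1.le _
  have hψ2 : ∫⁻ s in Ioo (0:ℝ) t, ψ s ^ (2:ℝ) = ∫⁻ s in Ioo (0:ℝ) t, ENNReal.ofReal (s ^ (1/2 : ℝ) * h s ^ 2) := by
    apply setLIntegral_congr_fun measurableSet_Ioo
    intro s hs
    show ENNReal.ofReal (s ^ ((1/4) : ℝ) * |h s|) ^ (2:ℝ) = _
    rw [ENNReal.ofReal_rpow_of_nonneg (mul_nonneg (Real.rpow_nonneg hs.1.le _) (abs_nonneg _)) (by norm_num)]
    congr 1
    rw [Real.mul_rpow (Real.rpow_nonneg hs.1.le _) (abs_nonneg _), rpow_sq s hs.1.le,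
      show (|h s|:ℝ) ^ (2:ℝ) = h s ^ 2 from by
        rw [show ((2:ℝ)) = ((2:ℕ):ℝ) by norm_num, Real.rpow_natCast, sq_abs]]
    norm_num
  calc ENNReal.ofReal ((∫ s in Ioo 0 t, h s) ^ 2)
      ≤ (∫⁻ s in Ioo (0:ℝ) t, ENNReal.ofReal |h s|) ^ 2 := step1
    _ = (∫⁻ s in Ioo (0:ℝ) t, φ s * ψ s) ^ 2 := by rw [step2]
    _ ≤ ((∫⁻ s in Ioo (0:ℝ) t, φ s ^ (2:ℝ)) ^ (1/(2:ℝ)) * (∫⁻ s in Ioo (0:ℝ) t, ψ s ^ (2:ℝ)) ^ (1/(2:ℝ))) ^ 2 := by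
        apply pow_le_pow_left' holder
    _ = (∫⁻ s in Ioo (0:ℝ) t, φ s ^ (2:ℝ)) * (∫⁻ s in Ioo (0:ℝ) t, ψ s ^ (2:ℝ)) := by
        rw [mul_pow, ← ENNReal.rpow_natCast (_ ^ (1/(2:ℝ))) 2, ← ENNReal.rpow_natCast (_ ^ (1/(2:ℝ))) 2,
          ← ENNReal.rpow_mul, ← ENNReal.rpow_mul]
        norm_num
    _ = ENNReal.ofReal (2 * t ^ (1/2 : ℝ)) * ∫⁻ s in Ioo (0:ℝ) t, ENNReal.ofReal (s ^ (1/2 : ℝ) * h s ^ 2) := by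
        rw [hφ2, hψ2]


lemma tail_lintegral {p : ℝ} (hp : p ≤ -(3/2:ℝ)) {s : ℝ} (hs : s ∈ Ioo (0:ℝ) 1) :
    ∫⁻ t in Ioo s 1, ENNReal.ofReal (2 * t ^ p) ≤ ENNReal.ofReal (4 * s ^ (p+1)) := by
  obtain ⟨hs0, hs1⟩ := hs
  have hnot : (0:ℝ) ∉ uIcc s 1 := by
    rw [uIcc_of_le hs1.le]
    rintro ⟨h0, _⟩
    linarith
  have hii : IntervalIntegrable (fun t : ℝ => 2 * t ^ p) volume s 1 := by
    have h1 : IntervalIntegrable (fun t : ℝ => t ^ p) volume s 1 :=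
      intervalIntegral.intervalIntegrable_rpow (Or.inr hnot)
    simpa using h1.const_mul 2
  have hio : IntegrableOn (fun t : ℝ => 2 * t ^ p) (Ioo s 1) := by
    rw [intervalIntegrable_iff_integrableOn_Ioo_of_le hs1.le] at hii
    exact hii
  have hnn : 0 ≤ᵐ[volume.restrict (Ioo s 1)] fun t : ℝ => 2 * t ^ p := by
    filter_upwards [ae_restrict_mem measurableSet_Ioo] with t ht
    exact mul_nonneg (by norm_num) (Real.rpow_nonneg (hs0.trans ht.1).le p)
  rw [← ofReal_integral_eq_lintegral_ofReal hio hnn]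
  apply ENNReal.ofReal_le_ofReal
  rw [← integral_Ioc_eq_integral_Ioo, ← intervalIntegral.integral_of_le hs1.le,
    intervalIntegral.integral_const_mul, integral_rpow (Or.inr ⟨by linarith, hnot⟩)]
  have hu : (1:ℝ) ≤ s ^ (p+1) :=
    Real.one_le_rpow_of_pos_of_le_one_of_nonpos hs0 hs1.le (by linarith)
  have hcneg : p + 1 < 0 := by linarith
  have hinv : (p+1)⁻¹ < 0 := inv_lt_zero.mpr hcneg
  have h2 : -2 ≤ (p+1)⁻¹ := by
    nlinarith [mul_inv_cancel₀ (ne_of_lt hcneg)]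
  rw [Real.one_rpow, div_eq_mul_inv]
  nlinarith




lemma hardy_step (m : ℝ) (hm : 1 ≤ m) (h : ℝ → ℝ) (hc : Continuous h) :
    ∫⁻ t in Ioo (0:ℝ) 1, ENNReal.ofReal ((∫ s in Ioo 0 t, h s) ^ 2 * t ^ (-(2*m)))
      ≤ 4 * ∫⁻ s in Ioo (0:ℝ) 1, ENNReal.ofReal (h s ^ 2 * s ^ (-(2*m) + 2)) := by
  set β : ℝ := 1/2 - 2*m with hβ
  set F : ℝ → ENNReal := fun s => ENNReal.ofReal (s ^ (1/2:ℝ) * h s ^ 2) with hF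
  set Φ : ℝ × ℝ → ENNReal := fun q => ENNReal.ofReal (2 * q.1 ^ β) * F q.2 with hΦ
  set S : Set (ℝ × ℝ) := {q | 0 < q.2 ∧ q.2 < q.1} with hS
  have m2 : Measurable fun s : ℝ => s ^ ((1/2):ℝ) := by fun_prop
  have hFm : Measurable F := (m2.mul (hc.measurable.pow_const 2)).ennreal_ofReal
  have hΦm : Measurable Φ := by
    refine Measurable.mul (f := fun q : ℝ × ℝ => ENNReal.ofReal (2 * q.1 ^ β)) (g := fun q : ℝ × ℝ => F q.2) ?_ ?_
    · exact ((by fun_prop : Measurable fun x : ℝ => ENNReal.ofReal (2 * x ^ β)).comp measurable_fst)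
    · exact hFm.comp measurable_snd
  have hSm : MeasurableSet S := by
    have : S = {q : ℝ × ℝ | 0 < q.2} ∩ {q : ℝ × ℝ | q.2 < q.1} := rfl
    rw [this]
    exact (measurableSet_lt measurable_const measurable_snd).inter
      (measurableSet_lt measurable_snd measurable_fst)
  -- pointwise Cauchy-Schwarz bound
  have stepA : ∀ t ∈ Ioo (0:ℝ) 1,
      ENNReal.ofReal ((∫ s in Ioo 0 t, h s) ^ 2 * t ^ (-(2*m)))
        ≤ ENNReal.ofReal (2 * t ^ β) * ∫⁻ s in Ioo (0:ℝ) t, F s := by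
    intro t ht
    rw [mul_comm ((∫ s in Ioo 0 t, h s) ^ 2), ENNReal.ofReal_mul (Real.rpow_nonneg ht.1.le _)]
    calc ENNReal.ofReal (t ^ (-(2*m))) * ENNReal.ofReal ((∫ s in Ioo 0 t, h s) ^ 2)
        ≤ ENNReal.ofReal (t ^ (-(2*m))) *
            (ENNReal.ofReal (2 * t ^ (1/2 : ℝ)) * ∫⁻ s in Ioo (0:ℝ) t, F s) :=
          mul_le_mul_right (cs_step h hc ht) _
      _ = ENNReal.ofReal (2 * t ^ β) * ∫⁻ s in Ioo (0:ℝ) t, F s := by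
          rw [← mul_assoc, ← ENNReal.ofReal_mul (Real.rpow_nonneg ht.1.le _)]
          congr 2
          rw [hβ, show (1/2 - 2*m : ℝ) = -(2*m) + 1/2 by ring, Real.rpow_add ht.1]
          ring
  -- rewrite inner integral as an integral over `Ioo 0 1` of an indicator
  have eq1 : ∀ t ∈ Ioo (0:ℝ) 1,
      ENNReal.ofReal (2 * t ^ β) * ∫⁻ s in Ioo (0:ℝ) t, F s
        = ∫⁻ s in Ioo (0:ℝ) 1, S.indicator Φ (t, s) := by
    intro t ht
    have e1 : ∀ s : ℝ, S.indicator Φ (t, s)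
        = (Ioo (0:ℝ) t).indicator (fun s => ENNReal.ofReal (2 * t ^ β) * F s) s := by
      intro s
      simp only [Set.indicator_apply, hS, mem_setOf_eq, mem_Ioo, hΦ]
    simp only [e1]
    rw [lintegral_indicator measurableSet_Ioo, Measure.restrict_restrict measurableSet_Ioo,
      inter_eq_self_of_subset_left (Ioo_subset_Ioo_right ht.2.le),
      lintegral_const_mul _ hFm]
  have swap : ∫⁻ t in Ioo (0:ℝ) 1, ∫⁻ s in Ioo (0:ℝ) 1, S.indicator Φ (t, s)
      = ∫⁻ s in Ioo (0:ℝ) 1, ∫⁻ t in Ioo (0:ℝ) 1, S.indicator Φ (t, s) :=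
    lintegral_lintegral_swap (hΦm.indicator hSm).aemeasurable
  have eq2 : ∀ s ∈ Ioo (0:ℝ) 1,
      ∫⁻ t in Ioo (0:ℝ) 1, S.indicator Φ (t, s)
        = (∫⁻ t in Ioo s 1, ENNReal.ofReal (2 * t ^ β)) * F s := by
    intro s hs
    have e1 : ∫⁻ t in Ioo (0:ℝ) 1, S.indicator Φ (t, s)
        = ∫⁻ t in Ioo (0:ℝ) 1, (Ioo s 1).indicator (fun t => ENNReal.ofReal (2 * t ^ β)) t * F s := by
      apply setLIntegral_congr_fun measurableSet_Ioo
      intro t ht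
      simp only [Set.indicator_apply, hS, mem_setOf_eq, mem_Ioo, hΦ]
      by_cases hst : s < t
      · simp [hst, hs.1, ht.2]
      · simp [hst, hs.1]
    rw [e1, lintegral_mul_const _ ((by fun_prop : Measurable fun t : ℝ => ENNReal.ofReal (2 * t ^ β)).indicator measurableSet_Ioo),
      lintegral_indicator measurableSet_Ioo, Measure.restrict_restrict measurableSet_Ioo,
      inter_eq_self_of_subset_left (Ioo_subset_Ioo_left hs.1.le)]
  have eq3 : ∀ s ∈ Ioo (0:ℝ) 1,
      ENNReal.ofReal (4 * s ^ (β+1)) * F s = 4 * ENNReal.ofReal (h s ^ 2 * s ^ (-(2*m) + 2)) := by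
    intro s hs
    have e : s ^ (β+1) * s ^ ((1/2):ℝ) = s ^ (-(2*m)+2) := by
      rw [← Real.rpow_add hs.1]; congr 1; rw [hβ]; ring
    rw [hF, ← ENNReal.ofReal_mul (mul_nonneg (by norm_num) (Real.rpow_nonneg hs.1.le _)),
      show (4:ENNReal) = ENNReal.ofReal (4:ℝ) by simp,
      ← ENNReal.ofReal_mul (by norm_num)]
    congr 1
    linear_combination (4 * h s ^ 2) * e
  calc ∫⁻ t in Ioo (0:ℝ) 1, ENNReal.ofReal ((∫ s in Ioo 0 t, h s) ^ 2 * t ^ (-(2*m)))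
      ≤ ∫⁻ t in Ioo (0:ℝ) 1, ∫⁻ s in Ioo (0:ℝ) 1, S.indicator Φ (t, s) := by
        apply lintegral_mono_ae
        filter_upwards [ae_restrict_mem measurableSet_Ioo] with t ht
        rw [← eq1 t ht]
        exact stepA t ht
    _ = ∫⁻ s in Ioo (0:ℝ) 1, ∫⁻ t in Ioo (0:ℝ) 1, S.indicator Φ (t, s) := swap
    _ ≤ ∫⁻ s in Ioo (0:ℝ) 1, 4 * ENNReal.ofReal (h s ^ 2 * s ^ (-(2*m) + 2)) := by
        apply lintegral_mono_ae
        filter_upwards [ae_restrict_mem measurableSet_Ioo] with s hs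
        rw [eq2 s hs, ← eq3 s hs]
        exact mul_le_mul_left (tail_lintegral (by rw [hβ]; linarith) hs) _
    _ = 4 * ∫⁻ s in Ioo (0:ℝ) 1, ENNReal.ofReal (h s ^ 2 * s ^ (-(2*m) + 2)) :=
        lintegral_const_mul' _ _ (by simp)




/-- higher-order one-dimensional Hardy inequality: for every integer `k ≥ 1`
there is `C > 0` such that every `C^k` function with vanishing derivatives of order `< k`
at `0` satisfies `∫₀¹ f(t)² t^{-2k} dt ≤ C ∫₀¹ f^{(k)}(t)² dt`. -/
theorem stmt7 (k : ℕ) (hk : 1 ≤ k) :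
    ∃ C > 0, ∀ f : ℝ → ℝ, ContDiff ℝ k f →
      (∀ i < k, iteratedDeriv i f 0 = 0) →
      ∫ t in Ioo (0 : ℝ) 1, f t ^ 2 * t ^ (-(2 * (k : ℝ)))
        ≤ C * ∫ t in Ioo (0 : ℝ) 1, iteratedDeriv k f t ^ 2 := by
  refine ⟨(4:ℝ)^k, by positivity, fun f hf h0 => ?_⟩
  have hgc : ∀ j, j ≤ k → Continuous (iteratedDeriv j f) := by
    intro j hj
    exact hf.continuous_iteratedDeriv j (by exact_mod_cast hj)
  have hftc : ∀ j, j < k → ∀ t ∈ Ioo (0:ℝ) 1,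
      iteratedDeriv j f t = ∫ s in Ioo 0 t, iteratedDeriv (j+1) f s := by
    intro j hj t ht
    have hd : ∀ x ∈ uIcc (0:ℝ) t, HasDerivAt (iteratedDeriv j f) (iteratedDeriv (j+1) f x) x := by
      intro x _
      rw [iteratedDeriv_succ]
      exact ((hf.differentiable_iteratedDeriv j (by exact_mod_cast hj)) x).hasDerivAt
    have hint : IntervalIntegrable (iteratedDeriv (j+1) f) volume 0 t :=
      (hgc (j+1) hj).intervalIntegrable 0 t
    have := intervalIntegral.integral_eq_sub_of_hasDerivAt hd hint
    rw [h0 j hj, sub_zero] at this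
    rw [← this, intervalIntegral.integral_of_le ht.1.le, integral_Ioc_eq_integral_Ioo]
  have main : ∀ j, j ≤ k →
      ∫⁻ t in Ioo (0:ℝ) 1, ENNReal.ofReal (f t ^ 2 * t ^ (-(2 * (k : ℝ))))
        ≤ 4^j * ∫⁻ t in Ioo (0:ℝ) 1,
            ENNReal.ofReal (iteratedDeriv j f t ^ 2 * t ^ (2*(j:ℝ) - 2*(k:ℝ))) := by
    intro j
    induction j with
    | zero =>
      intro _
      simp only [pow_zero, one_mul, iteratedDeriv_zero, Nat.cast_zero]
      rw [show (2*(0:ℝ) - 2*(k:ℝ)) = -(2*(k:ℝ)) by ring]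
    | succ j ih =>
      intro hjk
      rw [show ((j+1:ℕ):ℝ) = (j:ℝ)+1 by push_cast; ring]
      have hjk' : (j:ℝ) + 1 ≤ (k:ℝ) := by exact_mod_cast hjk
      have step : ∫⁻ t in Ioo (0:ℝ) 1,
            ENNReal.ofReal (iteratedDeriv j f t ^ 2 * t ^ (2*(j:ℝ) - 2*(k:ℝ)))
          ≤ 4 * ∫⁻ t in Ioo (0:ℝ) 1,
            ENNReal.ofReal (iteratedDeriv (j+1) f t ^ 2 * t ^ (2*((j:ℝ)+1) - 2*(k:ℝ))) := by
        have h1 := hardy_step ((k:ℝ) - j) (by linarith) (iteratedDeriv (j+1) f)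
          (hgc (j+1) hjk)
        rw [show (-(2*((k:ℝ) - j))) = 2*(j:ℝ) - 2*(k:ℝ) by ring,
          show (2*(j:ℝ) - 2*(k:ℝ) + 2) = 2*((j:ℕ)+1:ℝ) - 2*(k:ℝ) by push_cast; ring] at h1
        refine le_trans (le_of_eq ?_) h1
        apply setLIntegral_congr_fun measurableSet_Ioo
        intro t ht
        beta_reduce
        rw [hftc j (by omega) t ht]
      calc ∫⁻ t in Ioo (0:ℝ) 1, ENNReal.ofReal (f t ^ 2 * t ^ (-(2 * (k : ℝ))))
          ≤ 4^j * ∫⁻ t in Ioo (0:ℝ) 1,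
              ENNReal.ofReal (iteratedDeriv j f t ^ 2 * t ^ (2*(j:ℝ) - 2*(k:ℝ))) :=
            ih (by omega)
        _ ≤ 4^j * (4 * ∫⁻ t in Ioo (0:ℝ) 1,
              ENNReal.ofReal (iteratedDeriv (j+1) f t ^ 2 * t ^ (2*((j:ℝ)+1) - 2*(k:ℝ)))) :=
            mul_le_mul_right step _
        _ = 4^(j+1) * ∫⁻ t in Ioo (0:ℝ) 1,
              ENNReal.ofReal (iteratedDeriv (j+1) f t ^ 2 * t ^ (2*((j:ℝ)+1) - 2*(k:ℝ))) := by
            rw [pow_succ]; ring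
  have key := main k le_rfl
  rw [show (2*(k:ℝ) - 2*(k:ℝ)) = (0:ℝ) by ring] at key
  simp only [Real.rpow_zero, mul_one] at key
  -- convert to Bochner integrals
  have hfc : Continuous f := hf.continuous
  have hgkc : Continuous (iteratedDeriv k f) := hgc k le_rfl
  have hintk : IntegrableOn (fun t => iteratedDeriv k f t ^ 2) (Ioo (0:ℝ) 1) :=
    ((hgkc.pow 2).integrableOn_Icc (a := 0) (b := 1)).mono_set Ioo_subset_Icc_self
  have hRHSnn : (0:ℝ) ≤ ∫ t in Ioo (0:ℝ) 1, iteratedDeriv k f t ^ 2 :=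
    integral_nonneg fun t => sq_nonneg _
  have hfin : ∫⁻ t in Ioo (0:ℝ) 1, ENNReal.ofReal (iteratedDeriv k f t ^ 2)
      = ENNReal.ofReal (∫ t in Ioo (0:ℝ) 1, iteratedDeriv k f t ^ 2) :=
    (ofReal_integral_eq_lintegral_ofReal hintk
      (Filter.Eventually.of_forall fun t => sq_nonneg _)).symm
  have hLHS : ∫ t in Ioo (0:ℝ) 1, f t ^ 2 * t ^ (-(2 * (k : ℝ)))
      = (∫⁻ t in Ioo (0:ℝ) 1, ENNReal.ofReal (f t ^ 2 * t ^ (-(2 * (k : ℝ))))).toReal := by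
    apply integral_eq_lintegral_of_nonneg_ae
    · filter_upwards [ae_restrict_mem measurableSet_Ioo] with t ht
      exact mul_nonneg (sq_nonneg _) (Real.rpow_nonneg ht.1.le _)
    · exact ((hfc.measurable.pow_const 2).mul
        (by fun_prop : Measurable fun t : ℝ => t ^ (-(2 * (k:ℝ))))).aestronglyMeasurable
  rw [hLHS]
  have hb : (4:ENNReal)^k * ENNReal.ofReal (∫ t in Ioo (0:ℝ) 1, iteratedDeriv k f t ^ 2) ≠ ⊤ :=
    ENNReal.mul_ne_top (by simp) ENNReal.ofReal_ne_top
  calc (∫⁻ t in Ioo (0:ℝ) 1, ENNReal.ofReal (f t ^ 2 * t ^ (-(2 * (k : ℝ))))).toReal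
      ≤ ((4:ENNReal)^k * ENNReal.ofReal (∫ t in Ioo (0:ℝ) 1, iteratedDeriv k f t ^ 2)).toReal :=
        ENNReal.toReal_mono hb (by rw [← hfin]; exact key)
    _ = 4^k * ∫ t in Ioo (0:ℝ) 1, iteratedDeriv k f t ^ 2 := by
        rw [ENNReal.toReal_mul, ENNReal.toReal_pow, ENNReal.toReal_ofReal hRHSnn]
        norm_num
end

section
/- Trace-lifting estimate: for b ∈ H^{j−1/2}(𝕋), define b^♯(R,θ) = Σ_{n∈ℤ} b_n e^{inθ} χ̃((1+|n|)(R−1)) on Ω = (1,7)×𝕋, where b_n are the Fourier coefficients of b and χ̃ is a fixed smooth even cutoff equal to 1 on [−1/2,1/2] and 0 outside [−1,1]. Then for nonnegative integers j₁, j₂, l, k with j₁ + j₂ − k ≥ 1 there is C (depending on χ̃, j₁, j₂, l, k) such that ‖ρ^{k+l} ∂_θ^{j₁} ∂_R^{j₂+l} b^♯‖_{L²(Ω)} ≤ C ‖b‖_{H^{j₁+j₂−k−1/2}(𝕋)}, where ρ(R) = (R−1)(7−R)/6. -/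
open Real Set MeasureTheory Complex

/-- Partial derivative in the radial (first) variable, for complex-valued functions. -/
noncomputable def pRC (u : ℝ × ℝ → ℂ) : ℝ × ℝ → ℂ := fun x => deriv (fun s => u (s, x.2)) x.1

/-- Partial derivative in the angular (second) variable, for complex-valued functions. -/
noncomputable def pTC (u : ℝ × ℝ → ℂ) : ℝ × ℝ → ℂ := fun x => deriv (fun s => u (x.1, s)) x.2

/-- The trace lifting `b^♯(R,θ) = Σ_{n∈ℤ} b_n e^{inθ} χ̃((1+|n|)(R-1))`, where `b_n` are the
Fourier coefficients of `b` (given directly as a function on `ℤ`). -/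
noncomputable def bSharp (χ : ℝ → ℝ) (b : ℤ → ℂ) : ℝ × ℝ → ℂ := fun x =>
  ∑' n : ℤ, b n * Complex.exp (Complex.I * n * x.2) * (χ ((1 + |(n : ℝ)|) * (x.1 - 1)) : ℂ)

noncomputable def cc (n : ℤ) : ℝ := 1 + |(n : ℝ)|

lemma one_le_cc (n : ℤ) : 1 ≤ cc n := by
  simp only [cc]; linarith [abs_nonneg ((n : ℝ))]

lemma cc_pos (n : ℤ) : 0 < cc n := lt_of_lt_of_le one_pos (one_le_cc n)

noncomputable def trm (χ : ℝ → ℝ) (b : ℤ → ℂ) (p q : ℕ) (n : ℤ) (x : ℝ × ℝ) : ℂ :=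
  b n * (Complex.I * n) ^ p * Complex.exp (Complex.I * n * x.2) * ((cc n : ℝ) : ℂ) ^ q *
    ((iteratedDeriv q χ (cc n * (x.1 - 1)) : ℝ) : ℂ)

noncomputable def FS (δ : ℝ) : Finset ℤ := Finset.Icc (-(⌈1/δ⌉₊ : ℤ)) (⌈1/δ⌉₊ : ℤ)

lemma arg_gt_of_not_mem {δ : ℝ} (hδ : 0 < δ) {n : ℤ} (hn : n ∉ FS δ) {r : ℝ} (hr : δ ≤ r) :
    1 < cc n * r := by
  have h0 : (⌈1/δ⌉₊ : ℤ) < |n| := by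
    simp only [FS, Finset.mem_Icc, not_and_or, not_le] at hn
    rcases hn with h | h
    · rw [abs_of_neg (by omega : n < 0)]; omega
    · rw [abs_of_pos (by omega : 0 < n)]; omega
  have h1 : (⌈1/δ⌉₊ : ℝ) ≤ |(n : ℝ)| := by
    have : ((⌈1/δ⌉₊ : ℤ) : ℝ) ≤ (|n| : ℤ) := by exact_mod_cast h0.le
    simpa [Int.cast_abs] using this
  have h2 : 1/δ ≤ |(n : ℝ)| := le_trans (Nat.le_ceil _) h1
  have h3 : 1 + 1/δ ≤ cc n := by simpa [cc] using h2
  have h4 : (1 + 1/δ) * δ ≤ cc n * r :=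
    mul_le_mul h3 hr hδ.le (le_trans (by positivity) h3)
  have h5 : (1 + 1/δ) * δ = δ + 1 := by field_simp
  linarith

lemma iteratedDeriv_vanish {χ : ℝ → ℝ} (hzero : ∀ s : ℝ, 1 < |s| → χ s = 0) (q : ℕ) :
    ∀ y : ℝ, 1 < |y| → iteratedDeriv q χ y = 0 := by
  induction q with
  | zero => simpa using hzero
  | succ q ih =>
    intro y hy
    rw [iteratedDeriv_succ]
    have ho : IsOpen {t : ℝ | 1 < |t|} := isOpen_lt continuous_const continuous_abs
    have hev : iteratedDeriv q χ =ᶠ[nhds y] (fun _ => (0 : ℝ)) := by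
      filter_upwards [ho.mem_nhds hy] with t ht using ih t ht
    rw [hev.deriv_eq]
    simp

lemma trm_vanish {χ : ℝ → ℝ} (hzero : ∀ s : ℝ, 1 < |s| → χ s = 0) (b : ℤ → ℂ)
    (p q : ℕ) {δ : ℝ} (hδ : 0 < δ) {x : ℝ × ℝ} (hx : 1 + δ < x.1) {n : ℤ} (hn : n ∉ FS δ) :
    trm χ b p q n x = 0 := by
  have harg : 1 < cc n * (x.1 - 1) := arg_gt_of_not_mem hδ hn (by linarith)
  have habs : 1 < |cc n * (x.1 - 1)| := lt_of_lt_of_le harg (le_abs_self _)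
  simp [trm, iteratedDeriv_vanish hzero q _ habs]

lemma bSharp_eq_sum {χ : ℝ → ℝ} (hzero : ∀ s : ℝ, 1 < |s| → χ s = 0) (b : ℤ → ℂ)
    {δ : ℝ} (hδ : 0 < δ) {x : ℝ × ℝ} (hx : 1 + δ < x.1) :
    bSharp χ b x = ∑ n ∈ FS δ, trm χ b 0 0 n x := by
  have h1 : ∀ n : ℤ, b n * Complex.exp (Complex.I * n * x.2) *
      (χ ((1 + |(n : ℝ)|) * (x.1 - 1)) : ℂ) = trm χ b 0 0 n x := by
    intro n; simp [trm, cc]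
  rw [bSharp]
  rw [tsum_congr h1]
  exact tsum_eq_sum (fun n hn => trm_vanish hzero b 0 0 hδ hx hn)

lemma pRC_iter_eq {χ : ℝ → ℝ} (hχ : ContDiff ℝ (⊤ : ℕ∞) χ) (hzero : ∀ s : ℝ, 1 < |s| → χ s = 0)
    (b : ℤ → ℂ) (q : ℕ) {δ : ℝ} (hδ : 0 < δ) :
    ∀ x : ℝ × ℝ, 1 + δ < x.1 → pRC^[q] (bSharp χ b) x = ∑ n ∈ FS δ, trm χ b 0 q n x := by
  induction q with
  | zero => intro x hx; simpa using bSharp_eq_sum hzero b hδ hx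
  | succ q ih =>
    intro x hx
    rw [Function.iterate_succ_apply']
    show deriv (fun s => pRC^[q] (bSharp χ b) (s, x.2)) x.1 = _
    have hev : (fun s => pRC^[q] (bSharp χ b) (s, x.2)) =ᶠ[nhds x.1]
        (fun s => ∑ n ∈ FS δ, trm χ b 0 q n (s, x.2)) := by
      filter_upwards [Ioi_mem_nhds hx] with s hs
      exact ih (s, x.2) hs
    rw [hev.deriv_eq]
    have H : HasDerivAt (fun s => ∑ n ∈ FS δ, trm χ b 0 q n (s, x.2))
        (∑ n ∈ FS δ, trm χ b 0 (q+1) n x) x.1 := by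
      refine HasDerivAt.fun_sum fun n _ => ?_
      have h1 : HasDerivAt (fun s : ℝ => cc n * (s - 1)) (cc n) x.1 := by
        simpa using ((hasDerivAt_id x.1).sub_const 1).const_mul (cc n)
      have h2 : HasDerivAt (iteratedDeriv q χ)
          (iteratedDeriv (q+1) χ (cc n * (x.1 - 1))) (cc n * (x.1 - 1)) := by
        rw [iteratedDeriv_succ]
        exact ((hχ.differentiable_iteratedDeriv q (by exact_mod_cast ENat.coe_lt_top q)) _).hasDerivAt
      have hf : HasDerivAt (fun s : ℝ => iteratedDeriv q χ (cc n * (s - 1)))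
          (iteratedDeriv (q+1) χ (cc n * (x.1 - 1)) * cc n) x.1 := by have := h2.comp x.1 h1; exact this
      have h3 := (hf.ofReal_comp).const_mul
        (b n * (Complex.I * n) ^ 0 * Complex.exp (Complex.I * n * x.2) * ((cc n : ℝ) : ℂ) ^ q)
      have hfe : (fun s : ℝ => b n * (Complex.I * n) ^ 0 * Complex.exp (Complex.I * n * x.2) *
          ((cc n : ℝ) : ℂ) ^ q * ((iteratedDeriv q χ (cc n * (s - 1)) : ℝ) : ℂ)) =
          fun s : ℝ => trm χ b 0 q n (s, x.2) := by
        funext s; simp [trm]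
      rw [hfe] at h3
      refine h3.congr_deriv ?_
      simp only [trm, pow_succ]
      push_cast
      ring
    exact H.deriv

lemma pTC_pRC_eq {χ : ℝ → ℝ} (hχ : ContDiff ℝ (⊤ : ℕ∞) χ) (hzero : ∀ s : ℝ, 1 < |s| → χ s = 0)
    (b : ℤ → ℂ) (p q : ℕ) {δ : ℝ} (hδ : 0 < δ) :
    ∀ x : ℝ × ℝ, 1 + δ < x.1 →
      pTC^[p] (pRC^[q] (bSharp χ b)) x = ∑ n ∈ FS δ, trm χ b p q n x := by
  induction p with
  | zero => intro x hx; simpa using pRC_iter_eq hχ hzero b q hδ x hx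
  | succ p ih =>
    intro x hx
    rw [Function.iterate_succ_apply']
    show deriv (fun t => pTC^[p] (pRC^[q] (bSharp χ b)) (x.1, t)) x.2 = _
    have hfun : (fun t => pTC^[p] (pRC^[q] (bSharp χ b)) (x.1, t)) =
        fun t => ∑ n ∈ FS δ, trm χ b p q n (x.1, t) :=
      funext fun t => ih (x.1, t) hx
    rw [hfun]
    have H : HasDerivAt (fun t => ∑ n ∈ FS δ, trm χ b p q n (x.1, t))
        (∑ n ∈ FS δ, trm χ b (p+1) q n x) x.2 := by
      refine HasDerivAt.fun_sum fun n _ => ?_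
      have h0 : HasDerivAt (fun t : ℝ => Complex.I * n * (t : ℂ)) (Complex.I * n) x.2 := by
        simpa using ((hasDerivAt_id x.2).ofReal_comp).const_mul (Complex.I * (n : ℂ))
      have he : HasDerivAt (fun t : ℝ => Complex.exp (Complex.I * n * t))
          (Complex.exp (Complex.I * n * x.2) * (Complex.I * n)) x.2 := h0.cexp
      have h3 := he.const_mul
        (b n * (Complex.I * n) ^ p * ((cc n : ℝ) : ℂ) ^ q *
          ((iteratedDeriv q χ (cc n * (x.1 - 1)) : ℝ) : ℂ))
      have hfe : (fun t : ℝ => b n * (Complex.I * n) ^ p * ((cc n : ℝ) : ℂ) ^ q *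
          ((iteratedDeriv q χ (cc n * (x.1 - 1)) : ℝ) : ℂ) *
          Complex.exp (Complex.I * n * t)) = fun t : ℝ => trm χ b p q n (x.1, t) := by
        funext t; simp only [trm]; ring
      rw [hfe] at h3
      refine h3.congr_deriv ?_
      simp only [trm, pow_succ]
      ring
    exact H.deriv

lemma tsum_trm_eq {χ : ℝ → ℝ} (hzero : ∀ s : ℝ, 1 < |s| → χ s = 0) (b : ℤ → ℂ)
    (p q : ℕ) {δ : ℝ} (hδ : 0 < δ) {x : ℝ × ℝ} (hx : 1 + δ < x.1) :
    ∑' n : ℤ, trm χ b p q n x = ∑ n ∈ FS δ, trm χ b p q n x :=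
  tsum_eq_sum (fun n hn => trm_vanish hzero b p q hδ hx hn)

lemma rep_tsum {χ : ℝ → ℝ} (hχ : ContDiff ℝ (⊤ : ℕ∞) χ) (hzero : ∀ s : ℝ, 1 < |s| → χ s = 0)
    (b : ℤ → ℂ) (p q : ℕ) {x : ℝ × ℝ} (hx : 1 < x.1) :
    pTC^[p] (pRC^[q] (bSharp χ b)) x = ∑' n : ℤ, trm χ b p q n x := by
  have hδ : 0 < (x.1 - 1)/2 := by linarith
  have hx' : 1 + (x.1 - 1)/2 < x.1 := by linarith
  rw [pTC_pRC_eq hχ hzero b p q hδ x hx', tsum_trm_eq hzero b p q hδ hx']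


lemma re_intervalIntegral (g : ℝ → ℂ) (hg : IntervalIntegrable g volume 0 (2*π)) :
    ∫ θ in (0:ℝ)..(2*π), (g θ).re = (∫ θ in (0:ℝ)..(2*π), g θ).re := by
  have h2π : (0:ℝ) ≤ 2*π := by positivity
  rw [intervalIntegral.integral_of_le h2π, intervalIntegral.integral_of_le h2π]
  have hInt : IntegrableOn g (Ioc 0 (2*π)) volume :=
    (intervalIntegrable_iff_integrableOn_Ioc_of_le h2π).mp hg
  simpa using (Complex.reCLM.integral_comp_comm hInt)

lemma integral_exp_int (kk : ℤ) (hk : kk ≠ 0) :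
    ∫ θ in (0:ℝ)..(2*π), Complex.exp (Complex.I * kk * θ) = 0 := by
  have hc : (Complex.I * kk : ℂ) ≠ 0 :=
    mul_ne_zero Complex.I_ne_zero (by exact_mod_cast hk)
  have := integral_exp_mul_complex (a := 0) (b := 2*π) hc
  rw [this]
  have h1 : Complex.exp (Complex.I * kk * ((2*π : ℝ) : ℂ)) = 1 := by
    have := Complex.exp_int_mul_two_pi_mul_I kk
    rw [← this]; congr 1; push_cast; ring
  have h2 : Complex.exp (Complex.I * kk * ((0:ℝ) : ℂ)) = 1 := by
    norm_num
  rw [h1, h2]; simp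

lemma parseval (F : Finset ℤ) (cf : ℤ → ℂ) :
    ∫ θ in Set.Ioo (0:ℝ) (2*π), ‖∑ n ∈ F, cf n * Complex.exp (Complex.I * n * θ)‖^2 =
      2*π * ∑ n ∈ F, ‖cf n‖^2 := by
  have h2π : (0:ℝ) ≤ 2*π := by positivity
  rw [← MeasureTheory.integral_Ioc_eq_integral_Ioo, ← intervalIntegral.integral_of_le h2π]
  have hpt : ∀ θ : ℝ, ‖∑ n ∈ F, cf n * Complex.exp (Complex.I * n * θ)‖^2 =
      ∑ n ∈ F, ∑ m ∈ F,
        (cf n * (starRingEnd ℂ) (cf m) * Complex.exp (Complex.I * (n - m) * θ)).re := by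
    intro θ
    set f := ∑ n ∈ F, cf n * Complex.exp (Complex.I * n * θ) with hf
    have h1 : (‖f‖^2 : ℝ) = (f * (starRingEnd ℂ) f).re := by
      rw [Complex.mul_conj, Complex.ofReal_re, Complex.normSq_eq_norm_sq]
    have h2 : f * (starRingEnd ℂ) f = ∑ n ∈ F, ∑ m ∈ F,
        (cf n * (starRingEnd ℂ) (cf m) * Complex.exp (Complex.I * (n - m) * θ)) := by
      rw [hf, map_sum, Finset.sum_mul_sum]
      refine Finset.sum_congr rfl fun n _ => Finset.sum_congr rfl fun m _ => ?_
      have hc : (starRingEnd ℂ) (Complex.exp (Complex.I * m * θ)) =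
          Complex.exp (-(Complex.I * m * θ)) := by
        rw [← Complex.exp_conj]
        congr 1
        simp [map_mul, Complex.conj_I, Complex.conj_ofReal]
      have he : Complex.exp (Complex.I * n * θ) * Complex.exp (-(Complex.I * m * θ)) =
          Complex.exp (Complex.I * (n - m) * θ) := by
        rw [← Complex.exp_add]; ring_nf
      rw [map_mul, hc, ← he]; ring
    have h3 : ∑ n ∈ F, ∑ m ∈ F,
        (cf n * (starRingEnd ℂ) (cf m) * Complex.exp (Complex.I * (n - m) * θ)).re =
        (∑ n ∈ F, ∑ m ∈ F,
          (cf n * (starRingEnd ℂ) (cf m) * Complex.exp (Complex.I * (n - m) * θ))).re := by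
      rw [Complex.re_sum]
      exact Finset.sum_congr rfl fun n _ => (Complex.re_sum _ _).symm
    rw [h1, h2, ← h3]
  simp only [hpt]
  have hct : ∀ (c w : ℂ), Continuous (fun θ : ℝ => (c * Complex.exp (w * θ)).re) :=
    fun c w => Complex.continuous_re.comp (continuous_const.mul
      (Complex.continuous_exp.comp (continuous_const.mul Complex.continuous_ofReal)))
  have hci : ∀ (c w : ℂ), IntervalIntegrable
      (fun θ : ℝ => (c * Complex.exp (w * θ)).re) volume 0 (2*π) :=
    fun c w => (hct c w).intervalIntegrable _ _
  rw [intervalIntegral.integral_finset_sum (fun n (_ : n ∈ F) =>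
    ((continuous_finset_sum F (fun m _ => hct (cf n * (starRingEnd ℂ) (cf m))
      (Complex.I * ((n : ℂ) - (m : ℂ))))).intervalIntegrable 0 (2*π)))]
  have hint : ∀ n ∈ F, (∫ θ in (0:ℝ)..(2*π), ∑ m ∈ F,
      (cf n * (starRingEnd ℂ) (cf m) * Complex.exp (Complex.I * (n - m) * θ)).re) =
      2*π*‖cf n‖^2 := by
    intro n hn
    rw [intervalIntegral.integral_finset_sum (fun (m : ℤ) (_ : m ∈ F) =>
      hci (cf n * (starRingEnd ℂ) (cf m)) (Complex.I * ((n : ℂ) - (m : ℂ))))]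
    have hterm : ∀ m ∈ F, (∫ θ in (0:ℝ)..(2*π),
        (cf n * (starRingEnd ℂ) (cf m) * Complex.exp (Complex.I * (n - m) * θ)).re) =
        if n = m then 2*π*‖cf n‖^2 else 0 := by
      intro m _
      by_cases hnm : n = m
      · subst hnm
        simp only [if_pos rfl]
        have hptd : ∀ θ : ℝ, (cf n * (starRingEnd ℂ) (cf n) *
            Complex.exp (Complex.I * ((n : ℂ) - n) * θ)).re = ‖cf n‖^2 := by
          intro θ
          rw [sub_self, mul_zero, zero_mul, Complex.exp_zero, mul_one, Complex.mul_conj,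
            Complex.ofReal_re, Complex.normSq_eq_norm_sq]
        simp only [hptd]
        rw [intervalIntegral.integral_const]
        simp [mul_comm]
      · rw [if_neg hnm]
        have hre := re_intervalIntegral
          (fun θ => cf n * (starRingEnd ℂ) (cf m) * Complex.exp (Complex.I * (n - m) * θ))
          ((continuous_const.mul (Complex.continuous_exp.comp
            (continuous_const.mul Complex.continuous_ofReal))).intervalIntegrable _ _)
        rw [hre]
        have hz : (∫ θ in (0:ℝ)..(2*π),
            cf n * (starRingEnd ℂ) (cf m) * Complex.exp (Complex.I * (n - m) * θ)) = 0 := by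
          rw [intervalIntegral.integral_const_mul]
          have hei := integral_exp_int (n - m) (sub_ne_zero.mpr hnm)
          push_cast at hei
          rw [hei, mul_zero]
        rw [hz]
        simp
    rw [Finset.sum_congr rfl hterm, Finset.sum_ite_eq F n (fun _ => 2*π*‖cf n‖^2), if_pos hn]
  rw [Finset.sum_congr rfl hint, Finset.mul_sum]

lemma cont_trm {χ : ℝ → ℝ} (hχ : ContDiff ℝ (⊤ : ℕ∞) χ) (b : ℤ → ℂ) (p q : ℕ) (n : ℤ) :
    Continuous (trm χ b p q n) := by
  unfold trm
  exact ((continuous_const.mul (Complex.continuous_exp.comp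
      (continuous_const.mul (Complex.continuous_ofReal.comp continuous_snd)))).mul
    continuous_const).mul
    (Complex.continuous_ofReal.comp ((hχ.continuous_iteratedDeriv q (by exact_mod_cast le_top)).comp
      (continuous_const.mul (continuous_fst.sub continuous_const))))

noncomputable def phiF (χ : ℝ → ℝ) (b : ℤ → ℂ) (j₁ m kl : ℕ) (n : ℤ) (R : ℝ) : ENNReal :=
  ENNReal.ofReal (2*π*‖(((R - 1) * (7 - R) / 6) ^ kl : ℝ) •
    (b n * (Complex.I * n) ^ j₁ * ((cc n : ℝ) : ℂ) ^ m *
      ((iteratedDeriv m χ (cc n * (R - 1)) : ℝ) : ℂ))‖ ^ 2)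

set_option maxHeartbeats 2000000 in
/-- trace-lifting estimate. For nonnegative integers `j₁, j₂, l, k` with
`j₁ + j₂ - k ≥ 1` there is `C` such that
`‖ρ^{k+l} ∂_θ^{j₁} ∂_R^{j₂+l} b^♯‖_{L²(Ω)} ≤ C ‖b‖_{H^{j₁+j₂-k-1/2}(𝕋)}`,
the `H^s(𝕋)` norm being `(Σ (1+n²)^s |b_n|²)^{1/2}` and `ρ(R) = (R-1)(7-R)/6`. -/
theorem stmt13 (χ : ℝ → ℝ) (hχ : ContDiff ℝ (⊤ : ℕ∞) χ) (heven : ∀ s, χ (-s) = χ s)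
    (hone : ∀ s : ℝ, |s| ≤ 1 / 2 → χ s = 1) (hzero : ∀ s : ℝ, 1 < |s| → χ s = 0)
    (j₁ j₂ l k : ℕ) (hjk : k + 1 ≤ j₁ + j₂) :
    ∃ C > 0, ∀ b : ℤ → ℂ,
      Summable (fun n : ℤ =>
        (1 + (n : ℝ) ^ 2) ^ ((j₁ : ℝ) + (j₂ : ℝ) - (k : ℝ) - 1 / 2) * ‖b n‖ ^ 2) →
      Real.sqrt (∫ x in Ioo (1 : ℝ) 7 ×ˢ Ioo (0 : ℝ) (2 * Real.pi),
          ‖(((x.1 - 1) * (7 - x.1) / 6) ^ (k + l) : ℝ) •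
              pTC^[j₁] (pRC^[j₂ + l] (bSharp χ b)) x‖ ^ 2)
        ≤ C * Real.sqrt (∑' n : ℤ,
            (1 + (n : ℝ) ^ 2) ^ ((j₁ : ℝ) + (j₂ : ℝ) - (k : ℝ) - 1 / 2) * ‖b n‖ ^ 2) := by
  classical
  obtain ⟨M0, hM0⟩ := (isCompact_Icc (a := (-1:ℝ)) (b := 1)).exists_bound_of_continuousOn
    ((hχ.continuous_iteratedDeriv (j₂ + l) (by exact_mod_cast le_top)).continuousOn)
  set Mb := max M0 1 with hMbdef
  have hMb1 : (1:ℝ) ≤ Mb := le_max_right _ _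
  have hMbpos : (0:ℝ) < Mb := lt_of_lt_of_le one_pos hMb1
  have hMball : ∀ y : ℝ, 0 ≤ y → |iteratedDeriv (j₂ + l) χ y| ≤ Mb := by
    intro y hy
    rcases le_or_gt y 1 with h1 | h1
    · exact le_trans (by simpa using hM0 y ⟨by linarith, h1⟩) (le_max_left _ _)
    · rw [iteratedDeriv_vanish hzero (j₂ + l) y (by rwa [_root_.abs_of_nonneg hy])]
      simp only [abs_zero]
      linarith
  have hCcpos : (0:ℝ) < 2*π*Mb^2*2^(j₂+l) := by positivity
  refine ⟨Real.sqrt (2*π*Mb^2*2^(j₂+l)), Real.sqrt_pos.mpr hCcpos, ?_⟩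
  intro b hb
  set σ := (j₁ : ℝ) + (j₂ : ℝ) - (k : ℝ) - 1/2 with hσ
  set Q := Ioo (1 : ℝ) 7 ×ˢ Ioo (0 : ℝ) (2 * π) with hQ
  have hQm : MeasurableSet Q := measurableSet_Ioo.prod measurableSet_Ioo
  -- replace the derivative expression by the explicit sum
  have hrepl : ∫ x in Q, ‖(((x.1 - 1) * (7 - x.1) / 6) ^ (k + l) : ℝ) •
        pTC^[j₁] (pRC^[j₂ + l] (bSharp χ b)) x‖ ^ 2 =
      ∫ x in Q, ‖(((x.1 - 1) * (7 - x.1) / 6) ^ (k + l) : ℝ) •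
        ∑' n : ℤ, trm χ b j₁ (j₂ + l) n x‖ ^ 2 := by
    refine setIntegral_congr_fun hQm fun x hx => ?_
    rw [rep_tsum hχ hzero b j₁ (j₂ + l) hx.1.1]
  rw [hrepl]
  -- continuity of the new integrand on Q
  have hGc : ∀ x : ℝ × ℝ, 1 < x.1 →
      ContinuousAt (fun y : ℝ × ℝ => ∑' n : ℤ, trm χ b j₁ (j₂ + l) n y) x := by
    intro x hx
    have hδ : 0 < (x.1 - 1)/2 := by linarith
    have hU : IsOpen {y : ℝ × ℝ | 1 + (x.1 - 1)/2 < y.1} :=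
      isOpen_lt continuous_const continuous_fst
    have hsum : ContinuousAt
        (fun y : ℝ × ℝ => ∑ n ∈ FS ((x.1 - 1)/2), trm χ b j₁ (j₂ + l) n y) x :=
      (continuous_finset_sum _ fun n _ => cont_trm hχ b j₁ (j₂ + l) n).continuousAt
    refine hsum.congr ?_
    filter_upwards [hU.mem_nhds (by simp only [mem_setOf_eq]; linarith)] with y hy
    exact (tsum_trm_eq hzero b j₁ (j₂ + l) hδ hy).symm
  have hρc : Continuous (fun x : ℝ × ℝ => (((x.1 - 1) * (7 - x.1) / 6) ^ (k + l) : ℝ)) := by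
    fun_prop
  have hcontOn : ContinuousOn (fun x : ℝ × ℝ => ‖(((x.1 - 1) * (7 - x.1) / 6) ^ (k + l) : ℝ) •
      ∑' n : ℤ, trm χ b j₁ (j₂ + l) n x‖ ^ 2) Q := by
    intro x hx
    exact ((((hρc.continuousAt).smul (hGc x hx.1.1)).norm).pow 2).continuousWithinAt
  rw [integral_eq_lintegral_of_nonneg_ae (Filter.Eventually.of_forall fun x => by positivity)
    (hcontOn.aestronglyMeasurable hQm)]
  -- the per-mode functions
  have hφmeas : ∀ n : ℤ, Measurable (phiF χ b j₁ (j₂+l) (k+l) n) := by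
    intro n
    unfold phiF
    apply Measurable.ennreal_ofReal
    apply Measurable.const_mul
    apply Measurable.pow_const
    apply Continuous.measurable
    apply Continuous.norm
    apply Continuous.fun_smul
    · fun_prop
    · exact (continuous_const.mul
        (Complex.continuous_ofReal.comp ((hχ.continuous_iteratedDeriv (j₂ + l) (by exact_mod_cast le_top)).comp
          (continuous_const.mul ((continuous_id.sub continuous_const))))))
  -- key estimate
  have key : (∫⁻ x in Q, ENNReal.ofReal (‖(((x.1 - 1) * (7 - x.1) / 6) ^ (k + l) : ℝ) •
        ∑' n : ℤ, trm χ b j₁ (j₂ + l) n x‖ ^ 2)) ≤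
      ENNReal.ofReal ((2*π*Mb^2*2^(j₂+l)) * ∑' n : ℤ, (1 + (n : ℝ) ^ 2) ^ σ * ‖b n‖ ^ 2) := by
    have hre : (volume : Measure (ℝ × ℝ)).restrict Q =
        ((volume : Measure ℝ).restrict (Ioo 1 7)).prod
          ((volume : Measure ℝ).restrict (Ioo 0 (2*π))) := by
      rw [hQ, Measure.volume_eq_prod, Measure.prod_restrict]
    have hgm : AEMeasurable (fun x : ℝ × ℝ => ENNReal.ofReal
        (‖(((x.1 - 1) * (7 - x.1) / 6) ^ (k + l) : ℝ) •
          ∑' n : ℤ, trm χ b j₁ (j₂ + l) n x‖ ^ 2))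
        (((volume : Measure ℝ).restrict (Ioo 1 7)).prod
          ((volume : Measure ℝ).restrict (Ioo 0 (2*π)))) := by
      rw [← hre]
      exact (hcontOn.aemeasurable hQm).ennreal_ofReal
    -- inner bound
    have inner : ∀ R ∈ Ioo (1:ℝ) 7,
        (∫⁻ θ in Ioo (0:ℝ) (2*π), ENNReal.ofReal
          (‖((((R,θ).1 - 1) * (7 - (R,θ).1) / 6) ^ (k + l) : ℝ) •
            ∑' n : ℤ, trm χ b j₁ (j₂ + l) n (R,θ)‖ ^ 2)) ≤ ∑' n : ℤ, phiF χ b j₁ (j₂+l) (k+l) n R := by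
      intro R hR
      have h1R : (1:ℝ) < R := hR.1
      have hδ : 0 < (R - 1)/2 := by linarith
      set cf : ℤ → ℂ := fun n => (((R - 1) * (7 - R) / 6) ^ (k + l) : ℝ) •
        (b n * (Complex.I * n) ^ j₁ * ((cc n : ℝ) : ℂ) ^ (j₂ + l) *
          ((iteratedDeriv (j₂ + l) χ (cc n * (R - 1)) : ℝ) : ℂ)) with hcf
      have ha : ∀ θ : ℝ, ‖((((R,θ).1 - 1) * (7 - (R,θ).1) / 6) ^ (k + l) : ℝ) •
          ∑' n : ℤ, trm χ b j₁ (j₂ + l) n (R,θ)‖ ^ 2 =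
          ‖∑ n ∈ FS ((R - 1)/2), cf n * Complex.exp (Complex.I * n * θ)‖ ^ 2 := by
        intro θ
        have ht : (∑' n : ℤ, trm χ b j₁ (j₂ + l) n (R,θ)) =
            ∑ n ∈ FS ((R - 1)/2), trm χ b j₁ (j₂ + l) n (R,θ) :=
          tsum_trm_eq hzero b j₁ (j₂ + l) hδ (by linarith : 1 + (R-1)/2 < (R,θ).1)
        rw [ht, Finset.smul_sum]
        congr 2
        refine Finset.sum_congr rfl fun n _ => ?_
        simp only [hcf, trm, Complex.real_smul]
        ring
      have hcont2 : Continuous (fun θ : ℝ =>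
          ‖∑ n ∈ FS ((R - 1)/2), cf n * Complex.exp (Complex.I * n * θ)‖ ^ 2) := by
        apply Continuous.pow
        apply Continuous.norm
        exact continuous_finset_sum _ fun n _ => continuous_const.mul
          (Complex.continuous_exp.comp (continuous_const.mul Complex.continuous_ofReal))
      have hInt : IntegrableOn (fun θ : ℝ =>
          ‖∑ n ∈ FS ((R - 1)/2), cf n * Complex.exp (Complex.I * n * θ)‖ ^ 2)
          (Ioo 0 (2*π)) volume :=
        (hcont2.integrableOn_Icc).mono_set Ioo_subset_Icc_self
      calc (∫⁻ θ in Ioo (0:ℝ) (2*π), ENNReal.ofReal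
            (‖((((R,θ).1 - 1) * (7 - (R,θ).1) / 6) ^ (k + l) : ℝ) •
              ∑' n : ℤ, trm χ b j₁ (j₂ + l) n (R,θ)‖ ^ 2))
          = ∫⁻ θ in Ioo (0:ℝ) (2*π), ENNReal.ofReal
              (‖∑ n ∈ FS ((R - 1)/2), cf n * Complex.exp (Complex.I * n * θ)‖ ^ 2) := by
            refine setLIntegral_congr_fun measurableSet_Ioo
              (fun θ _ => ?_)
            rw [ha θ]
        _ = ENNReal.ofReal (∫ θ in Ioo (0:ℝ) (2*π),
              ‖∑ n ∈ FS ((R - 1)/2), cf n * Complex.exp (Complex.I * n * θ)‖ ^ 2) :=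
            (ofReal_integral_eq_lintegral_ofReal hInt
              (Filter.Eventually.of_forall fun θ => by positivity)).symm
        _ = ENNReal.ofReal (2*π * ∑ n ∈ FS ((R - 1)/2), ‖cf n‖ ^ 2) := by
            rw [parseval]
        _ = ∑ n ∈ FS ((R - 1)/2), ENNReal.ofReal (2*π * ‖cf n‖ ^ 2) := by
            rw [Finset.mul_sum, ENNReal.ofReal_sum_of_nonneg (fun n _ => by positivity)]
        _ ≤ ∑' n : ℤ, phiF χ b j₁ (j₂+l) (k+l) n R := ENNReal.sum_le_tsum _
    -- per-mode integral bound
    have pern : ∀ n : ℤ, (∫⁻ R in Ioo (1:ℝ) 7, phiF χ b j₁ (j₂+l) (k+l) n R) ≤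
        ENNReal.ofReal ((2*π*Mb^2*2^(j₂+l)) * ((1 + (n : ℝ) ^ 2) ^ σ * ‖b n‖ ^ 2)) := by
      intro n
      have hcn1 : (1:ℝ) ≤ cc n := one_le_cc n
      have hcnpos : (0:ℝ) < cc n := cc_pos n
      have hBnn : (0:ℝ) ≤ 2*π*(Mb^2 * (‖b n‖^2 * (((n:ℝ)^2)^j₁ * ((cc n)^2)^(j₂+l) / ((cc n)^2)^(k+l)))) := by
        positivity
      have hpt : ∀ R ∈ Ioo (1:ℝ) 7, phiF χ b j₁ (j₂+l) (k+l) n R ≤ (Ioc (1:ℝ) (1 + 1/(cc n))).indicator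
          (fun _ => ENNReal.ofReal (2*π*(Mb^2 * (‖b n‖^2 *
            (((n:ℝ)^2)^j₁ * ((cc n)^2)^(j₂+l) / ((cc n)^2)^(k+l)))))) R := by
        intro R hR
        by_cases hcase : cc n * (R - 1) ≤ 1
        · have hRle : R ≤ 1 + 1/(cc n) := by
            rw [← sub_le_iff_le_add']
            rw [le_div_iff₀ hcnpos]
            linarith [hcase]
          have hRmem : R ∈ Ioc (1:ℝ) (1 + 1/(cc n)) := ⟨hR.1, hRle⟩
          rw [Set.indicator_of_mem hRmem]
          simp only [phiF]
          apply ENNReal.ofReal_le_ofReal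
          have hρ0 : (0:ℝ) ≤ (R - 1) * (7 - R) / 6 := by nlinarith [hR.1, hR.2]
          have hρle : (R - 1) * (7 - R) / 6 ≤ 1/(cc n) := by
            have h7 : (7 - R)/6 ≤ 1 := by nlinarith [hR.1]
            have h8 : (R - 1) * (7 - R) / 6 ≤ R - 1 := by nlinarith [hR.1, hR.2]
            have hr1 : R - 1 ≤ 1/(cc n) := by
              rw [le_div_iff₀ hcnpos]; linarith [hcase]
            linarith
          have e1 : ‖(Complex.I * (n:ℂ))‖ = |(n:ℝ)| := by simp
          have e2 : ‖((cc n : ℝ) : ℂ)‖ = cc n := by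
            simp [Complex.norm_real, _root_.abs_of_pos hcnpos]
          have e3 : ‖((iteratedDeriv (j₂+l) χ (cc n * (R-1)) : ℝ) : ℂ)‖ =
              |iteratedDeriv (j₂+l) χ (cc n * (R-1))| := by
            simp [Complex.norm_real]
          have hnb : ‖(((R - 1) * (7 - R) / 6) ^ (k + l) : ℝ) •
              (b n * (Complex.I * n) ^ j₁ * ((cc n : ℝ) : ℂ) ^ (j₂ + l) *
                ((iteratedDeriv (j₂ + l) χ (cc n * (R - 1)) : ℝ) : ℂ))‖ ≤
              (1/(cc n))^(k+l) * (‖b n‖ * |(n:ℝ)|^j₁ * (cc n)^(j₂+l) * Mb) := by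
            rw [norm_smul]
            have hsc : ‖(((R - 1) * (7 - R) / 6) ^ (k + l) : ℝ)‖ ≤ (1/(cc n))^(k+l) := by
              rw [Real.norm_eq_abs, _root_.abs_pow, _root_.abs_of_nonneg hρ0]
              exact pow_le_pow_left₀ hρ0 hρle _
            have hzz : ‖b n * (Complex.I * n) ^ j₁ * ((cc n : ℝ) : ℂ) ^ (j₂ + l) *
                ((iteratedDeriv (j₂ + l) χ (cc n * (R - 1)) : ℝ) : ℂ)‖ ≤
                ‖b n‖ * |(n:ℝ)|^j₁ * (cc n)^(j₂+l) * Mb := by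
              rw [norm_mul, norm_mul, norm_mul, norm_pow, norm_pow, e1, e2, e3]
              exact mul_le_mul_of_nonneg_left
                (hMball (cc n * (R - 1)) (mul_nonneg hcnpos.le (by linarith [hR.1])))
                (by positivity)
            exact mul_le_mul hsc hzz (norm_nonneg _) (by positivity)
          calc 2*π*‖(((R - 1) * (7 - R) / 6) ^ (k + l) : ℝ) •
                (b n * (Complex.I * n) ^ j₁ * ((cc n : ℝ) : ℂ) ^ (j₂ + l) *
                  ((iteratedDeriv (j₂ + l) χ (cc n * (R - 1)) : ℝ) : ℂ))‖ ^ 2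
              ≤ 2*π*((1/(cc n))^(k+l) * (‖b n‖ * |(n:ℝ)|^j₁ * (cc n)^(j₂+l) * Mb))^2 := by
                refine mul_le_mul_of_nonneg_left ?_ (by positivity)
                exact pow_le_pow_left₀ (norm_nonneg _) hnb 2
            _ = 2*π*(Mb^2 * (‖b n‖^2 * (((n:ℝ)^2)^j₁ * ((cc n)^2)^(j₂+l) / ((cc n)^2)^(k+l)))) := by
                rw [← _root_.sq_abs ((n:ℝ))]
                rw [pow_right_comm (cc n) 2 (k+l), pow_right_comm (cc n) 2 (j₂+l), pow_right_comm |(n:ℝ)| 2 j₁]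
                ring
        · push_neg at hcase
          have hv : iteratedDeriv (j₂ + l) χ (cc n * (R - 1)) = 0 := by
            apply iteratedDeriv_vanish hzero
            rw [_root_.abs_of_nonneg (by nlinarith [hR.1] : (0:ℝ) ≤ cc n * (R - 1))]
            exact hcase
          have hz : phiF χ b j₁ (j₂+l) (k+l) n R = 0 := by
            simp only [phiF, hv]
            simp
          rw [hz]
          exact bot_le
      calc (∫⁻ R in Ioo (1:ℝ) 7, phiF χ b j₁ (j₂+l) (k+l) n R)
          ≤ ∫⁻ R in Ioo (1:ℝ) 7, (Ioc (1:ℝ) (1 + 1/(cc n))).indicator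
              (fun _ => ENNReal.ofReal (2*π*(Mb^2 * (‖b n‖^2 *
                (((n:ℝ)^2)^j₁ * ((cc n)^2)^(j₂+l) / ((cc n)^2)^(k+l)))))) R :=
            setLIntegral_mono_ae
              ((measurable_const.indicator measurableSet_Ioc).aemeasurable)
              (Filter.Eventually.of_forall hpt)
        _ ≤ ∫⁻ R, (Ioc (1:ℝ) (1 + 1/(cc n))).indicator
              (fun _ => ENNReal.ofReal (2*π*(Mb^2 * (‖b n‖^2 *
                (((n:ℝ)^2)^j₁ * ((cc n)^2)^(j₂+l) / ((cc n)^2)^(k+l)))))) R :=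
            setLIntegral_le_lintegral _ _
        _ = ENNReal.ofReal (2*π*(Mb^2 * (‖b n‖^2 *
              (((n:ℝ)^2)^j₁ * ((cc n)^2)^(j₂+l) / ((cc n)^2)^(k+l))))) *
              volume (Ioc (1:ℝ) (1 + 1/(cc n))) := by
            rw [lintegral_indicator measurableSet_Ioc, setLIntegral_const]
        _ = ENNReal.ofReal ((2*π*(Mb^2 * (‖b n‖^2 *
              (((n:ℝ)^2)^j₁ * ((cc n)^2)^(j₂+l) / ((cc n)^2)^(k+l))))) * (1/(cc n))) := by
            rw [Real.volume_Ioc, ← ENNReal.ofReal_mul hBnn]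
            congr 2
            ring
        _ ≤ ENNReal.ofReal ((2*π*Mb^2*2^(j₂+l)) * ((1 + (n : ℝ) ^ 2) ^ σ * ‖b n‖ ^ 2)) := by
            apply ENNReal.ofReal_le_ofReal
            -- arithmetic
            have hA1 : (1:ℝ) ≤ 1 + (n:ℝ)^2 := by nlinarith [sq_nonneg ((n:ℝ))]
            have hApos : (0:ℝ) < 1 + (n:ℝ)^2 := by linarith
            have h2A : (cc n)^2 ≤ 2*(1 + (n:ℝ)^2) := by
              simp only [cc]
              nlinarith [_root_.sq_abs ((n:ℝ)), _root_.abs_nonneg ((n:ℝ)), sq_nonneg (|(n:ℝ)| - 1)]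
            have h3A : (1 + (n:ℝ)^2) ≤ (cc n)^2 := by
              simp only [cc]
              nlinarith [_root_.sq_abs ((n:ℝ)), _root_.abs_nonneg ((n:ℝ))]
            have hsqrt : (1 + (n:ℝ)^2) ^ ((1:ℝ)/2) ≤ cc n := by
              rw [← Real.sqrt_eq_rpow]
              calc Real.sqrt (1 + (n:ℝ)^2) ≤ Real.sqrt ((cc n)^2) := Real.sqrt_le_sqrt h3A
                _ = cc n := Real.sqrt_sq hcnpos.le
            have hfrac : ((n:ℝ)^2)^j₁ * ((cc n)^2)^(j₂+l) / ((cc n)^2)^(k+l) / (cc n) ≤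
                2^(j₂+l) * (1 + (n:ℝ)^2) ^ σ := by
              have hnum : ((n:ℝ)^2)^j₁ * ((cc n)^2)^(j₂+l) ≤
                  (1 + (n:ℝ)^2)^j₁ * (2*(1 + (n:ℝ)^2))^(j₂+l) :=
                mul_le_mul (pow_le_pow_left₀ (sq_nonneg _) (by nlinarith [sq_nonneg ((n:ℝ))]) _)
                  (pow_le_pow_left₀ (sq_nonneg _) h2A _) (by positivity) (by positivity)
              have hstep0 : ((n:ℝ)^2)^j₁ * ((cc n)^2)^(j₂+l) / ((cc n)^2)^(k+l) ≤
                  (1 + (n:ℝ)^2)^j₁ * (2*(1 + (n:ℝ)^2))^(j₂+l) / (1 + (n:ℝ)^2)^(k+l) :=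
                div_le_div₀ (by positivity) hnum (by positivity)
                  (pow_le_pow_left₀ (by positivity) h3A _)
              have step1 : ((n:ℝ)^2)^j₁ * ((cc n)^2)^(j₂+l) / ((cc n)^2)^(k+l) / (cc n) ≤
                  (1 + (n:ℝ)^2)^j₁ * (2*(1 + (n:ℝ)^2))^(j₂+l) / (1 + (n:ℝ)^2)^(k+l) /
                    ((1 + (n:ℝ)^2) ^ ((1:ℝ)/2)) :=
                div_le_div₀ (by positivity) hstep0 (Real.rpow_pos_of_pos hApos _) hsqrt
              refine le_trans step1 (le_of_eq ?_)
              rw [mul_pow]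
              rw [div_div]
              rw [show (2:ℝ)^(j₂+l) * (1 + (n:ℝ)^2)^(j₂+l) = (1 + (n:ℝ)^2)^(j₂+l) * 2^(j₂+l) from by ring]
              rw [show (1 + (n:ℝ)^2)^j₁ * ((1 + (n:ℝ)^2)^(j₂+l) * 2^(j₂+l)) =
                2^(j₂+l) * (1 + (n:ℝ)^2)^(j₁+(j₂+l)) from by rw [pow_add]; ring]
              rw [mul_div_assoc]
              congr 1
              rw [← Real.rpow_natCast (1 + (n:ℝ)^2) (j₁+(j₂+l)),
                ← Real.rpow_natCast (1 + (n:ℝ)^2) (k+l),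
                ← Real.rpow_add hApos, ← Real.rpow_sub hApos]
              congr 1
              rw [hσ]
              push_cast
              ring
            calc (2*π*(Mb^2 * (‖b n‖^2 *
                  (((n:ℝ)^2)^j₁ * ((cc n)^2)^(j₂+l) / ((cc n)^2)^(k+l))))) * (1/(cc n))
                = 2*π*Mb^2*‖b n‖^2 *
                  (((n:ℝ)^2)^j₁ * ((cc n)^2)^(j₂+l) / ((cc n)^2)^(k+l) / (cc n)) := by
                  ring
              _ ≤ 2*π*Mb^2*‖b n‖^2 * (2^(j₂+l) * (1 + (n:ℝ)^2) ^ σ) := by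
                  apply mul_le_mul_of_nonneg_left hfrac (by positivity)
              _ = (2*π*Mb^2*2^(j₂+l)) * ((1 + (n : ℝ) ^ 2) ^ σ * ‖b n‖ ^ 2) := by ring
    calc (∫⁻ x in Q, ENNReal.ofReal (‖(((x.1 - 1) * (7 - x.1) / 6) ^ (k + l) : ℝ) •
          ∑' n : ℤ, trm χ b j₁ (j₂ + l) n x‖ ^ 2))
        = ∫⁻ R in Ioo (1:ℝ) 7, ∫⁻ θ in Ioo (0:ℝ) (2*π), ENNReal.ofReal
            (‖((((R,θ).1 - 1) * (7 - (R,θ).1) / 6) ^ (k + l) : ℝ) •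
              ∑' n : ℤ, trm χ b j₁ (j₂ + l) n (R,θ)‖ ^ 2) := by
          rw [hre, lintegral_prod _ hgm]
      _ ≤ ∫⁻ R in Ioo (1:ℝ) 7, ∑' n : ℤ, phiF χ b j₁ (j₂+l) (k+l) n R := by
          refine setLIntegral_mono_ae
            ((Measurable.ennreal_tsum fun n => hφmeas n).aemeasurable)
            (Filter.Eventually.of_forall inner)
      _ = ∑' n : ℤ, ∫⁻ R in Ioo (1:ℝ) 7, phiF χ b j₁ (j₂+l) (k+l) n R :=
          lintegral_tsum fun n => (hφmeas n).aemeasurable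
      _ ≤ ∑' n : ℤ, ENNReal.ofReal ((2*π*Mb^2*2^(j₂+l)) *
            ((1 + (n : ℝ) ^ 2) ^ σ * ‖b n‖ ^ 2)) := ENNReal.tsum_le_tsum pern
      _ = ENNReal.ofReal (∑' n : ℤ, (2*π*Mb^2*2^(j₂+l)) *
            ((1 + (n : ℝ) ^ 2) ^ σ * ‖b n‖ ^ 2)) :=
          (ENNReal.ofReal_tsum_of_nonneg (fun n => by positivity) (hb.mul_left _)).symm
      _ = ENNReal.ofReal ((2*π*Mb^2*2^(j₂+l)) * ∑' n : ℤ,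
            (1 + (n : ℝ) ^ 2) ^ σ * ‖b n‖ ^ 2) := by rw [tsum_mul_left]
  -- finish
  have hS0 : (0:ℝ) ≤ ∑' n : ℤ, (1 + (n : ℝ) ^ 2) ^ σ * ‖b n‖ ^ 2 :=
    tsum_nonneg fun n => by positivity
  have h1 : (∫⁻ x in Q, ENNReal.ofReal (‖(((x.1 - 1) * (7 - x.1) / 6) ^ (k + l) : ℝ) •
        ∑' n : ℤ, trm χ b j₁ (j₂ + l) n x‖ ^ 2)).toReal ≤
      (2*π*Mb^2*2^(j₂+l)) * ∑' n : ℤ, (1 + (n : ℝ) ^ 2) ^ σ * ‖b n‖ ^ 2 :=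
    ENNReal.toReal_le_of_le_ofReal (by positivity) key
  calc Real.sqrt ((∫⁻ x in Q, ENNReal.ofReal (‖(((x.1 - 1) * (7 - x.1) / 6) ^ (k + l) : ℝ) •
        ∑' n : ℤ, trm χ b j₁ (j₂ + l) n x‖ ^ 2)).toReal)
      ≤ Real.sqrt ((2*π*Mb^2*2^(j₂+l)) *
          ∑' n : ℤ, (1 + (n : ℝ) ^ 2) ^ σ * ‖b n‖ ^ 2) := Real.sqrt_le_sqrt h1
    _ = Real.sqrt (2*π*Mb^2*2^(j₂+l)) *
          Real.sqrt (∑' n : ℤ, (1 + (n : ℝ) ^ 2) ^ σ * ‖b n‖ ^ 2) :=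
        Real.sqrt_mul hCcpos.le _
end
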